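/- arXiv:math/9410208 — 8 statements merged into one kernel-verified Lean document; each statement's English description precedes it below -/
import Mathlib

section
/- Let S be a finite set of points in ℝ³, let α > 0 be real, and let x ∈ ℝ³. Then x belongs to the α-diagram U_α of S if and only if the open ball of radius α centered at x has nonempty intersection with the α-hull H_α of S. -/
noncomputable section

abbrev E3 := EuclideanSpace ℝ (Fin 3)

/-- The α-hull of `S`: the complement of the union of all empty open α-balls. -/
def alphaHull (S : Set E3) (α : ℝ) : Set E3 :=
  (⋃ (x : E3) (_ : Metric.ball x α ∩ S = ∅), Metric.ball x α)ᶜ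

/-- The α-diagram of `S`: the union of the open α-balls centered at points of `S`. -/
def alphaDiagram (S : Set E3) (α : ℝ) : Set E3 :=
  ⋃ p ∈ S, Metric.ball p α

theorem mem_alphaDiagram_iff (S : Set E3) (hS : S.Finite) (α : ℝ) (hα : 0 < α) (x : E3) :
    x ∈ alphaDiagram S α ↔ (Metric.ball x α ∩ alphaHull S α).Nonempty := by
  constructor
  · intro hx
    simp only [alphaDiagram, Set.mem_iUnion, exists_prop] at hx
    obtain ⟨p, hpS, hp⟩ := hx
    refine ⟨p, ?_, ?_⟩
    · rw [Metric.mem_ball, dist_comm]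
      exact Metric.mem_ball.mp hp
    ·
      simp only [alphaHull, Set.mem_compl_iff, Set.mem_iUnion, not_exists]
      rintro z hz hpz
      exact Set.eq_empty_iff_forall_notMem.mp hz p ⟨hpz, hpS⟩
  · rintro ⟨y, hyx, hyH⟩
    by_contra hx
    apply hyH
    simp only [Set.mem_iUnion]
    refine ⟨x, ?_, hyx⟩
    rw [Set.eq_empty_iff_forall_notMem]
    rintro z ⟨hzx, hzS⟩
    exact hx (Set.mem_biUnion hzS (by rw [Metric.mem_ball, dist_comm]; exact hzx))
end
end

section
/- Let S be a finite set of points in ℝ³, let α > 0 be real, and let x ∈ ℝ³. Then x belongs to the α-hull H_α of S if and only if the open ball of radius α centered at x is contained in the α-diagram U_α of S. -/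
noncomputable section

theorem mem_alphaHull_iff (S : Set E3) (hS : S.Finite) (α : ℝ) (hα : 0 < α) (x : E3) :
    x ∈ alphaHull S α ↔ Metric.ball x α ⊆ alphaDiagram S α := by
  constructor
  · intro h y hy
    by_contra hne
    apply h
    refine Set.mem_iUnion.2 ⟨y, Set.mem_iUnion.2 ⟨?_, ?_⟩⟩
    · ext z
      simp only [Set.mem_inter_iff, Metric.mem_ball, Set.mem_empty_iff_false, iff_false,
        not_and]
      intro hz hzS
      exact hne (Set.mem_iUnion₂.2 ⟨z, hzS, by rwa [Metric.mem_ball, dist_comm]⟩)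
    · rw [Metric.mem_ball, dist_comm]
      exact Metric.mem_ball.1 hy
  · intro h hmem
    obtain ⟨c, hc⟩ := Set.mem_iUnion.1 hmem
    obtain ⟨hce, hxc⟩ := Set.mem_iUnion.1 hc
    have hcU : c ∈ alphaDiagram S α := h (by rw [Metric.mem_ball, dist_comm]; exact Metric.mem_ball.1 hxc)
    obtain ⟨p, hp, hcp⟩ := Set.mem_iUnion₂.1 hcU
    have : p ∈ Metric.ball c α ∩ S :=
      ⟨by rw [Metric.mem_ball, dist_comm]; exact Metric.mem_ball.1 hcp, hp⟩
    rw [hce] at this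
    exact this
end
end

section
/- Let S be a finite set of points in ℝ³ and let α > 0 be a real number such that 2·α ≤ dist p q for all distinct points p, q ∈ S. Then the α-hull of S equals S itself: H_α = S. -/
noncomputable section

theorem alphaHull_eq_self_of_small (S : Set E3) (hS : S.Finite) (α : ℝ) (hα : 0 < α)
    (hsep : ∀ p ∈ S, ∀ q ∈ S, p ≠ q → 2 * α ≤ dist p q) :
    alphaHull S α = S := by
  ext x
  simp only [alphaHull, Set.mem_compl_iff, Set.mem_iUnion, not_exists]
  constructor
  · intro h
    by_contra hx
    -- build an empty ball containing x
    by_cases hb : Metric.ball x α ∩ S = ∅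
    · exact h x hb (Metric.mem_ball_self hα)
    · obtain ⟨p, hpb, hpS⟩ := Set.nonempty_iff_ne_empty.2 hb
      have hd : dist x p < α := by simpa [dist_comm] using hpb
      have hxp : x ≠ p := fun hxy => hx (hxy ▸ hpS)
      have hd0 : 0 < dist x p := dist_pos.2 hxp
      set d := dist x p with hdd
      set c : E3 := p + (α / d) • (x - p) with hc
      have hcp : dist c p = α := by
        have : c - p = (α / d) • (x - p) := by simp [hc]
        rw [dist_eq_norm, this, norm_smul]
        rw [Real.norm_eq_abs, abs_of_pos (by positivity)]
        have : ‖x - p‖ = d := by rw [hdd, dist_eq_norm]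
        rw [this]
        field_simp
      have hcx : dist c x = α - d := by
        have h1 : c - x = (α / d - 1) • (x - p) := by
          simp [hc, sub_smul, one_smul]
          abel
        rw [dist_eq_norm, h1, norm_smul, Real.norm_eq_abs]
        have hge : (1:ℝ) ≤ α / d := (one_le_div hd0).2 hd.le
        rw [abs_of_nonneg (by linarith)]
        have : ‖x - p‖ = d := by rw [hdd, dist_eq_norm]
        rw [this]
        field_simp
      have hxc : x ∈ Metric.ball c α := by
        rw [Metric.mem_ball, dist_comm, hcx]; linarith
      have hempty : Metric.ball c α ∩ S = ∅ := by
        rw [Set.eq_empty_iff_forall_notMem]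
        rintro q ⟨hqb, hqS⟩
        rw [Metric.mem_ball] at hqb
        by_cases hq : q = p
        · subst hq
          rw [dist_comm] at hqb
          linarith [hcp]
        · have := hsep q hqS p hpS hq
          have htri : dist q p ≤ dist q c + dist c p := dist_triangle q c p
          rw [hcp] at htri
          linarith
      exact h c hempty hxc
  · intro hx c hc hxc
    exact (Set.eq_empty_iff_forall_notMem.1 hc x) ⟨hxc, hx⟩
end
end

section
/- Let S be a finite set of points in ℝ³ and let T be a nonempty subset of S. Then the set of real numbers {α : 0 < α and T is α-exposed with respect to S} is order-connected (an interval): if α₁ < α₂ both belong to the set and α₁ ≤ β ≤ α₂, then β belongs to the set. -/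
noncomputable section

/-- `T` is α-exposed with respect to `S`: there is an empty open α-ball whose
bounding sphere intersects `S` exactly in `T`. -/
def IsAlphaExposed (S T : Set E3) (α : ℝ) : Prop :=
  ∃ x : E3, Metric.ball x α ∩ S = ∅ ∧ Metric.sphere x α ∩ S = T

lemma quad_norm (x₁ x₂ s : E3) (t : ℝ) :
    ‖x₁ + t • (x₂ - x₁) - s‖^2
      = (1-t)*‖x₁-s‖^2 + t*‖x₂-s‖^2 + (t^2-t)*‖x₂-x₁‖^2 := by
  have h : x₁ + t • (x₂ - x₁) - s = (x₁ - s) + t • (x₂ - x₁) := by abel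
  have h2 : x₂ - s = (x₁ - s) + (x₂ - x₁) := by abel
  rw [h, h2]
  set a := x₁ - s
  set v := x₂ - x₁
  have e1 : ‖a + t • v‖^2 = ‖a‖^2 + 2*(t*(inner ℝ a v : ℝ)) + t^2*‖v‖^2 := by
    rw [← real_inner_self_eq_norm_sq, real_inner_add_add_self, real_inner_smul_right,
      real_inner_smul_left, real_inner_smul_right, real_inner_self_eq_norm_sq,
      real_inner_self_eq_norm_sq]
    ring
  have e2 : ‖a + v‖^2 = ‖a‖^2 + 2*(inner ℝ a v : ℝ) + ‖v‖^2 := by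
    rw [← real_inner_self_eq_norm_sq, real_inner_add_add_self,
      real_inner_self_eq_norm_sq, real_inner_self_eq_norm_sq]
  rw [e1, e2]; ring

set_option maxHeartbeats 1000000 in
theorem alphaExposed_ordConnected (S T : Set E3) (hS : S.Finite) (hTS : T ⊆ S)
    (hT : T.Nonempty) :
    Set.OrdConnected {α : ℝ | 0 < α ∧ IsAlphaExposed S T α} := by
  constructor
  rintro a ⟨ha0, x₁, hball₁, hsph₁⟩ b ⟨hb0, x₂, hball₂, hsph₂⟩ β ⟨haβ, hβb⟩
  have hβ0 : 0 < β := lt_of_lt_of_le ha0 haβ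
  obtain ⟨s₀, hs₀⟩ := hT
  -- distance facts at the endpoints
  have dT1 : ∀ s ∈ T, ‖x₁ - s‖ = a := by
    intro s hs
    have hm : s ∈ Metric.sphere x₁ a ∩ S := by rw [hsph₁]; exact hs
    have := hm.1
    rw [Metric.mem_sphere] at this
    rw [← this, dist_comm, dist_eq_norm]
  have dT2 : ∀ s ∈ T, ‖x₂ - s‖ = b := by
    intro s hs
    have hm : s ∈ Metric.sphere x₂ b ∩ S := by rw [hsph₂]; exact hs
    have := hm.1
    rw [Metric.mem_sphere] at this
    rw [← this, dist_comm, dist_eq_norm]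
  have dN1 : ∀ s ∈ S, s ∉ T → a < ‖x₁ - s‖ := by
    intro s hsS hsT
    have hne : ‖x₁ - s‖ ≠ a := by
      intro h
      apply hsT
      rw [← hsph₁]
      exact ⟨by rw [Metric.mem_sphere, dist_comm, dist_eq_norm]; exact h, hsS⟩
    have hge : ¬ ‖x₁ - s‖ < a := by
      intro h
      have : s ∈ Metric.ball x₁ a ∩ S :=
        ⟨by rw [Metric.mem_ball, dist_comm, dist_eq_norm]; exact h, hsS⟩
      rw [hball₁] at this
      exact this
    rcases lt_trichotomy (‖x₁ - s‖) a with h | h | h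
    · exact absurd h hge
    · exact absurd h hne
    · exact h
  have dN2 : ∀ s ∈ S, s ∉ T → b < ‖x₂ - s‖ := by
    intro s hsS hsT
    have hne : ‖x₂ - s‖ ≠ b := by
      intro h
      apply hsT
      rw [← hsph₂]
      exact ⟨by rw [Metric.mem_sphere, dist_comm, dist_eq_norm]; exact h, hsS⟩
    have hge : ¬ ‖x₂ - s‖ < b := by
      intro h
      have : s ∈ Metric.ball x₂ b ∩ S :=
        ⟨by rw [Metric.mem_ball, dist_comm, dist_eq_norm]; exact h, hsS⟩
      rw [hball₂] at this
      exact this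
    rcases lt_trichotomy (‖x₂ - s‖) b with h | h | h
    · exact absurd h hge
    · exact absurd h hne
    · exact h
  set v : E3 := x₂ - x₁ with hv
  set x : ℝ → E3 := fun t => x₁ + t • v with hx
  -- squared distance for points of T
  have A : ∀ s ∈ T, ∀ t : ℝ,
      ‖x t - s‖^2 = (1-t)*a^2 + t*b^2 + (t^2-t)*‖v‖^2 := by
    intro s hs t
    rw [hx]
    simp only
    rw [quad_norm, dT1 s hs, dT2 s hs]
  -- squared distance for points of S \ T
  have B : ∀ s ∈ S, s ∉ T → ∀ t ∈ Set.Icc (0:ℝ) 1,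
      (1-t)*a^2 + t*b^2 + (t^2-t)*‖v‖^2 < ‖x t - s‖^2 := by
    intro s hsS hsT t ht
    have h1 := dN1 s hsS hsT
    have h2 := dN2 s hsS hsT
    have h1' : a^2 < ‖x₁ - s‖^2 := by nlinarith [ha0]
    have h2' : b^2 < ‖x₂ - s‖^2 := by nlinarith [hb0]
    have hq : ‖x t - s‖^2 = (1-t)*‖x₁-s‖^2 + t*‖x₂-s‖^2 + (t^2-t)*‖v‖^2 := by
      rw [hx]; simp only; rw [quad_norm]
    rw [hq]
    rcases ht with ⟨ht0, ht1⟩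
    have key : 0 < (1-t)*(‖x₁-s‖^2-a^2) + t*(‖x₂-s‖^2-b^2) := by
      rcases eq_or_lt_of_le ht0 with h | h
      · rw [← h]; simp; linarith
      · have p1 := mul_pos h (sub_pos.mpr h2')
        have p2 := mul_nonneg (sub_nonneg.mpr ht1) (le_of_lt (sub_pos.mpr h1'))
        linarith
    nlinarith [key]
  -- the radius function
  set φ : ℝ → ℝ := fun t => ‖x t - s₀‖ with hφ
  have hcont : Continuous φ := by
    apply Continuous.norm
    apply Continuous.sub
    · exact continuous_const.add (continuous_id.smul continuous_const)
    · exact continuous_const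
  have hφ0 : φ 0 = a := by
    have : x 0 = x₁ := by simp [hx]
    rw [hφ]; simp only; rw [this]; exact dT1 s₀ hs₀
  have hφ1 : φ 1 = b := by
    have : x 1 = x₂ := by simp [hx, hv]
    rw [hφ]; simp only; rw [this]; exact dT2 s₀ hs₀
  have hab : a ≤ b := le_trans haβ hβb
  have hmem : β ∈ Set.Icc (φ 0) (φ 1) := by rw [hφ0, hφ1]; exact ⟨haβ, hβb⟩
  obtain ⟨t, htI, htβ⟩ := intermediate_value_Icc (zero_le_one) hcont.continuousOn hmem
  -- now build the witness
  refine ⟨hβ0, x t, ?_, ?_⟩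
  · rw [Set.eq_empty_iff_forall_notMem]
    rintro y ⟨hy1, hy2⟩
    rw [Metric.mem_ball, dist_comm, dist_eq_norm] at hy1
    by_cases hyT : y ∈ T
    · have := A y hyT t
      have hs0 := A s₀ hs₀ t
      have : ‖x t - y‖ = β := by
        have hsq : ‖x t - y‖^2 = β^2 := by
          rw [this, ← hs0, ← htβ]
        nlinarith [norm_nonneg (x t - y), hβ0]
      linarith [hy1, this.ge]
    · have hB := B y hy2 hyT t htI
      have hs0 := A s₀ hs₀ t
      have hβsq : β^2 = (1-t)*a^2 + t*b^2 + (t^2-t)*‖v‖^2 := by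
        rw [← hs0, ← htβ]
      nlinarith [norm_nonneg (x t - y)]
  · ext y
    constructor
    · rintro ⟨hy1, hy2⟩
      rw [Metric.mem_sphere, dist_comm, dist_eq_norm] at hy1
      by_cases hyT : y ∈ T
      · exact hyT
      · exfalso
        have hB := B y hy2 hyT t htI
        have hs0 := A s₀ hs₀ t
        have hβsq : β^2 = (1-t)*a^2 + t*b^2 + (t^2-t)*‖v‖^2 := by
          rw [← hs0, ← htβ]
        have hsq : ‖x t - y‖^2 = β^2 := by rw [hy1]
        linarith [hB, hβsq, hsq]
    · intro hyT
      refine ⟨?_, hTS hyT⟩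
      rw [Metric.mem_sphere, dist_comm, dist_eq_norm]
      have hA := A y hyT t
      have hs0 := A s₀ hs₀ t
      have hsq : ‖x t - y‖^2 = β^2 := by rw [hA, ← hs0, ← htβ]
      nlinarith [norm_nonneg (x t - y), hβ0]
end
end

section
/- Let S be a finite set of n ≥ 5 points in ℝ³ in general position (every 4-element subset of S is affinely independent and no 5-element subset of S is cospherical). Then the number of 3-element subsets T of S for which there exists an open ball b with b ∩ S = ∅ whose bounding sphere intersects S exactly in T is at most n² − 3n. -/
noncomputable section
open scoped RealInnerProductSpace
open Finset

-- helpers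
lemma sq_combo_zero {a b s : ℝ} (ha : a ≤ 0) (hb : b ≤ 0) (hs0 : 0 < s) (hs1 : s < 1)
    (h : (1 - s) * a + s * b = 0) : a = 0 ∧ b = 0 := by
  constructor <;> nlinarith

lemma finrank_E3 : Module.finrank ℝ E3 = 3 := by
  simp [finrank_euclideanSpace]

lemma exists_perp_two (v₁ v₂ : E3) : ∃ u : E3, u ≠ 0 ∧ ⟪u, v₁⟫ = 0 ∧ ⟪u, v₂⟫ = 0 := by
  classical
  set P : Submodule ℝ E3 := Submodule.span ℝ {v₁, v₂}
  have hP : P ≠ ⊤ := by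
    intro h
    have h1 : Module.finrank ℝ P ≤ 2 := by
      refine le_trans (finrank_span_le_card ({v₁, v₂} : Set E3)) ?_
      rw [Set.toFinset_insert, Set.toFinset_singleton]
      exact (Finset.card_insert_le _ _).trans (by simp)
    rw [h] at h1
    rw [finrank_top, finrank_E3] at h1
    omega
  have hPbot : Pᗮ ≠ ⊥ := by
    intro h
    exact hP (Submodule.orthogonal_eq_bot_iff.mp h)
  obtain ⟨u, hu, hune⟩ := Submodule.exists_mem_ne_zero_of_ne_bot hPbot
  refine ⟨u, hune, ?_, ?_⟩
  · have := hu v₁ (Submodule.subset_span (by simp))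
    rwa [real_inner_comm] at this
  · have := hu v₂ (Submodule.subset_span (by simp))
    rwa [real_inner_comm] at this

lemma exists_eps (X : Finset E3) (A B : E3 → ℝ) (h : ∀ x ∈ X, A x < 0) :
    ∃ ε : ℝ, 0 < ε ∧ ∀ x ∈ X, A x + ε * B x < 0 := by
  classical
  set F : E3 → ℝ := fun x => if B x ≤ 0 then 1 else (-A x) / (2 * B x) with hF
  have hFpos : ∀ x ∈ X, 0 < F x := by
    intro x hx
    by_cases hB : B x ≤ 0
    · simp [hF, hB]
    · push_neg at hB
      have : 0 < -A x := by linarith [h x hx]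
      simp only [hF, if_neg (not_le.mpr hB)]
      positivity
  set E : Finset ℝ := insert 1 (X.image F) with hE
  have hne : E.Nonempty := ⟨1, by simp [hE]⟩
  have hall : ∀ y ∈ E, 0 < y := by
    intro y hy
    rcases (by simpa [hE] using hy : y = 1 ∨ ∃ a ∈ X, F a = y) with h1 | ⟨x, hx, hfx⟩
    · rw [h1]; norm_num
    · rw [← hfx]; exact hFpos x hx
  have hpos : 0 < E.min' hne := hall _ (E.min'_mem hne)
  refine ⟨E.min' hne, hpos, ?_⟩
  · intro x hx
    have hle : E.min' hne ≤ F x := Finset.min'_le _ _ (by simp [hE, Finset.mem_image]; right; exact ⟨x, hx, rfl⟩)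
    by_cases hB : B x ≤ 0
    · have : E.min' hne * B x ≤ 0 := mul_nonpos_of_nonneg_of_nonpos hpos.le hB
      linarith [h x hx]
    · push_neg at hB
      have hFx : F x = (-A x) / (2 * B x) := by simp [hF, not_le.mpr hB]
      have h2 : E.min' hne * B x ≤ F x * B x := mul_le_mul_of_nonneg_right hle hB.le
      rw [hFx] at h2
      have h3 : (-A x) / (2 * B x) * B x = -A x / 2 := by field_simp
      rw [h3] at h2
      linarith [h x hx]

lemma exists_generic (P : Finset E3) (hP : ∀ v ∈ P, v ≠ 0) :
    ∃ w : E3, ∀ v ∈ P, ⟪w, v⟫ ≠ 0 := by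
  classical
  induction P using Finset.induction_on with
  | empty => exact ⟨0, by simp⟩
  | @insert v P hv ih =>
    obtain ⟨w, hw⟩ := ih (fun x hx => hP x (Finset.mem_insert_of_mem hx))
    have hv0 : v ≠ 0 := hP v (Finset.mem_insert_self v P)
    by_cases hwv : ⟪w, v⟫ ≠ 0
    · exact ⟨w, fun x hx => by
        rcases Finset.mem_insert.mp hx with rfl | hx
        · exact hwv
        · exact hw x hx⟩
    · push_neg at hwv
      set bad : Finset ℝ := insert 0 (P.image fun x => -⟪w, x⟫ / ⟪v, x⟫) with hbad
      obtain ⟨ε, hε⟩ := Finset.exists_notMem bad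
      refine ⟨w + ε • v, ?_⟩
      have hε0 : ε ≠ 0 := fun h => hε (h ▸ by simp [hbad])
      intro x hx
      rcases Finset.mem_insert.mp hx with rfl | hx
      · rw [inner_add_left, real_inner_smul_left, hwv]
        have : ⟪x, x⟫ ≠ 0 := fun h => hv0 (inner_self_eq_zero.mp h)
        intro hcon
        apply this
        have : ε * ⟪x, x⟫ = 0 := by linarith [hcon]
        exact (mul_eq_zero.mp this).resolve_left hε0
      · rw [inner_add_left, real_inner_smul_left]
        by_cases hvx : ⟪v, x⟫ = 0
        · rw [hvx]
          simpa using hw x hx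
        · intro hcon
          apply hε
          rw [hbad]
          apply Finset.mem_insert_of_mem
          rw [Finset.mem_image]
          refine ⟨x, hx, ?_⟩
          rw [div_eq_iff hvx]
          linarith [hcon]

lemma mem_span_pair_of_ker {w d₁ d₂ d₃ : E3} (hw : w ≠ 0)
    (h1 : ⟪w, d₁⟫ = 0) (h2 : ⟪w, d₂⟫ = 0) (h3 : ⟪w, d₃⟫ = 0)
    (hli : LinearIndependent ℝ ![d₁, d₂]) :
    ∃ a b : ℝ, a • d₁ + b • d₂ = d₃ := by
  classical
  set K : Submodule ℝ E3 := (Submodule.span ℝ {w})ᗮ with hK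
  have hmem : ∀ d : E3, ⟪w, d⟫ = 0 → d ∈ K := by
    intro d hd
    rw [hK, Submodule.mem_orthogonal]
    intro u hu
    rw [Submodule.mem_span_singleton] at hu
    obtain ⟨c, rfl⟩ := hu
    rw [real_inner_smul_left, hd, mul_zero]
  have hKrank : Module.finrank ℝ K = 2 := by
    have h := (Submodule.span ℝ {w}).finrank_add_finrank_orthogonal
    rw [finrank_span_singleton hw] at h
    rw [show Module.finrank ℝ (EuclideanSpace ℝ (Fin 3)) = 3 from by simp [finrank_euclideanSpace]] at h
    rw [hK]
    omega
  set P : Submodule ℝ E3 := Submodule.span ℝ {d₁, d₂} with hP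
  have hPK : P ≤ K := by
    rw [hP, Submodule.span_le]
    rintro x (rfl | rfl)
    · exact hmem _ h1
    · exact hmem _ (by simpa using h2)
  have hPrank : Module.finrank ℝ P = 2 := by
    have hr : Set.range ![d₁, d₂] = {d₁, d₂} := by
      ext x
      simp [Fin.exists_fin_two]
      tauto
    have h2 := finrank_span_eq_card hli
    rw [hr] at h2
    rw [hP, h2]
    simp
  have hPeq : P = K := Submodule.eq_of_le_of_finrank_le hPK (by rw [hKrank, hPrank])
  have : d₃ ∈ P := hPeq ▸ hmem _ h3
  exact Submodule.mem_span_pair.mp this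

def IsFacetF (M f : Finset E3) : Prop :=
  f ⊆ M ∧ f.card = 3 ∧ ∃ (u : E3) (β : ℝ), (∀ x ∈ f, ⟪u, x⟫ = β) ∧ ∀ x ∈ M, x ∉ f → ⟪u, x⟫ < β

def IsEdgeF (M e : Finset E3) : Prop :=
  e ⊆ M ∧ e.card = 2 ∧ ∃ (u : E3) (β : ℝ), (∀ x ∈ e, ⟪u, x⟫ = β) ∧ ∀ x ∈ M, x ∉ e → ⟪u, x⟫ < β

variable {M : Finset E3}

lemma noncollinear (hplane : ∀ (u : E3) (β : ℝ), u ≠ 0 → ∀ T ⊆ M, (∀ x ∈ T, ⟪u, x⟫ = β) → T.card ≤ 3)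
    (hM : 4 ≤ M.card) {a b c : E3} (ha : a ∈ M) (hb : b ∈ M) (hc : c ∈ M)
    (hab : a ≠ b) (hac : a ≠ c) (hbc : b ≠ c) (t : ℝ) : c - a ≠ t • (b - a) := by
  intro heq
  classical
  have hne : (M \ {a, b, c}).Nonempty := by
    rw [← Finset.card_pos]
    have h1 : ({a, b, c} : Finset E3).card ≤ 3 := by
      refine (Finset.card_insert_le _ _).trans ?_
      have h := Finset.card_insert_le b {c}
      simp only [Finset.card_singleton] at h
      omega
    have h2 := Finset.card_sdiff_add_card_eq_card (Finset.insert_subset ha (Finset.insert_subset hb (Finset.singleton_subset_iff.mpr hc)))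
    omega
  obtain ⟨w, hwmem⟩ := hne
  have hwM : w ∈ M := (Finset.mem_sdiff.mp hwmem).1
  have hwabc : w ∉ ({a, b, c} : Finset E3) := (Finset.mem_sdiff.mp hwmem).2
  simp only [Finset.mem_insert, Finset.mem_singleton, not_or] at hwabc
  obtain ⟨hwa, hwb, hwc⟩ := hwabc
  obtain ⟨u, hu0, hu1, hu2⟩ := exists_perp_two (b - a) (w - a)
  have hT : ({a, b, c, w} : Finset E3).card = 4 := by
    rw [Finset.card_insert_of_notMem (by simp [hab, hac, Ne.symm hwa]),
        Finset.card_insert_of_notMem (by simp [hbc, Ne.symm hwb]),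
        Finset.card_insert_of_notMem (by simp [Ne.symm hwc])]
    simp
  have hTM : ({a, b, c, w} : Finset E3) ⊆ M := by
    intro x hx
    simp only [Finset.mem_insert, Finset.mem_singleton] at hx
    rcases hx with rfl | rfl | rfl | rfl <;> assumption
  have := hplane u (⟪u, a⟫) hu0 _ hTM ?_
  · omega
  intro x hx
  simp only [Finset.mem_insert, Finset.mem_singleton] at hx
  have hb' : ⟪u, b⟫ = ⟪u, a⟫ := by
    have : ⟪u, b - a⟫ = 0 := hu1
    rw [inner_sub_right] at this
    linarith
  have hw' : ⟪u, w⟫ = ⟪u, a⟫ := by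
    have : ⟪u, w - a⟫ = 0 := hu2
    rw [inner_sub_right] at this
    linarith
  have hc' : ⟪u, c⟫ = ⟪u, a⟫ := by
    have h3 : ⟪u, c - a⟫ = t * ⟪u, b - a⟫ := by rw [heq, real_inner_smul_right]
    rw [inner_sub_right, inner_sub_right, hb'] at h3
    have : ⟪u, c⟫ - ⟪u, a⟫ = t * (⟪u, a⟫ - ⟪u, a⟫) := h3
    linarith [this]
  rcases hx with rfl | rfl | rfl | rfl
  · rfl
  · exact hb'
  · exact hc'
  · exact hw'

lemma facet_pair_edge (hplane : ∀ (u : E3) (β : ℝ), u ≠ 0 → ∀ T ⊆ M, (∀ x ∈ T, ⟪u, x⟫ = β) → T.card ≤ 3)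
    (hM : 4 ≤ M.card) {f e : Finset E3} (hf : IsFacetF M f) (he : e ⊆ f) (he2 : e.card = 2) :
    IsEdgeF M e := by
  classical
  obtain ⟨hfM, hf3, u₀, β₀, hon, hstrict⟩ := hf
  have hsd : (f \ e).card = 1 := by
    rw [Finset.card_sdiff_of_subset he, hf3, he2]
  obtain ⟨c, hc⟩ := Finset.card_eq_one.mp hsd
  obtain ⟨a, b, hab, rfl⟩ := Finset.card_eq_two.mp he2
  have hcf : c ∈ f := by
    have : c ∈ f \ ({a, b} : Finset E3) := hc ▸ Finset.mem_singleton_self c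
    exact (Finset.mem_sdiff.mp this).1
  have hce : c ∉ ({a, b} : Finset E3) := by
    have : c ∈ f \ ({a, b} : Finset E3) := hc ▸ Finset.mem_singleton_self c
    exact (Finset.mem_sdiff.mp this).2
  simp only [Finset.mem_insert, Finset.mem_singleton, not_or] at hce
  obtain ⟨hca, hcb⟩ := hce
  have haf : a ∈ f := he (by simp)
  have hbf : b ∈ f := he (by simp)
  have haM : a ∈ M := hfM haf
  have hbM : b ∈ M := hfM hbf
  have hcM : c ∈ M := hfM hcf
  have hncol := noncollinear hplane hM haM hbM hcM hab (Ne.symm hca) (Ne.symm hcb)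
  set d : E3 := b - a with hd
  have hdd : ⟪d, d⟫ ≠ 0 := by
    rw [inner_self_ne_zero, hd, sub_ne_zero]
    exact Ne.symm hab
  set k : ℝ := ⟪c - a, d⟫ / ⟪d, d⟫ with hk
  set z : E3 := k • d - (c - a) with hz
  have hz0 : z ≠ 0 := by
    intro h
    have : c - a = k • d := by
      rw [hz] at h
      rw [sub_eq_zero] at h
      exact h.symm
    exact hncol k this
  have hzd : ⟪z, d⟫ = 0 := by
    rw [hz, inner_sub_left, real_inner_smul_left, hk]
    rw [div_mul_cancel₀ _ hdd]
    rw [real_inner_comm]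
    ring
  have hzb : ⟪z, b⟫ = ⟪z, a⟫ := by
    have : ⟪z, b - a⟫ = 0 := hd ▸ hzd
    rw [inner_sub_right] at this
    linarith
  have hzc : ⟪z, c⟫ - ⟪z, a⟫ < 0 := by
    have hzz : (0:ℝ) < ⟪z, z⟫ :=
      lt_of_le_of_ne real_inner_self_nonneg (Ne.symm (inner_self_ne_zero.mpr hz0))
    have h1 : ⟪z, z⟫ = -(⟪z, c⟫ - ⟪z, a⟫) := by
      nth_rewrite 2 [hz]
      rw [inner_sub_right, real_inner_smul_right, hzd, mul_zero, inner_sub_right]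
      ring
    linarith
  obtain ⟨ε, hε, hεall⟩ := exists_eps (M \ f) (fun x => ⟪u₀, x⟫ - β₀) (fun x => ⟪z, x⟫ - ⟪z, a⟫)
    (fun x hx => by
      have h1 := hstrict x (Finset.mem_sdiff.mp hx).1 (Finset.mem_sdiff.mp hx).2
      show ⟪u₀, x⟫ - β₀ < 0
      linarith)
  refine ⟨he.trans hfM, he2, u₀ + ε • z, β₀ + ε * ⟪z, a⟫, ?_, ?_⟩
  · intro x hx
    simp only [Finset.mem_insert, Finset.mem_singleton] at hx
    rcases hx with rfl | rfl
    · rw [inner_add_left, real_inner_smul_left, hon x haf]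
    · rw [inner_add_left, real_inner_smul_left, hon _ hbf, hzb]
  · intro x hxM hxe
    rw [inner_add_left, real_inner_smul_left]
    by_cases hxf : x ∈ f
    · have hxc : x = c := by
        have : x ∈ f \ ({a, b} : Finset E3) := Finset.mem_sdiff.mpr ⟨hxf, hxe⟩
        rw [hc] at this
        exact Finset.mem_singleton.mp this
      subst hxc
      rw [hon _ hcf]
      nlinarith [hzc]
    · have h2 := hεall x (Finset.mem_sdiff.mpr ⟨hxM, hxf⟩)
      nlinarith [h2]

lemma edge_two_facets (hplane : ∀ (u : E3) (β : ℝ), u ≠ 0 → ∀ T ⊆ M, (∀ x ∈ T, ⟪u, x⟫ = β) → T.card ≤ 3)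
    (hM : 4 ≤ M.card) {e : Finset E3} (he : IsEdgeF M e) :
    ∃ f₁ f₂ : Finset E3, IsFacetF M f₁ ∧ IsFacetF M f₂ ∧ e ⊆ f₁ ∧ e ⊆ f₂ ∧ f₁ ≠ f₂ := by
  classical
  obtain ⟨heM, he2, u₀, β₀, hon, hstrict⟩ := he
  obtain ⟨a, b, hab, rfl⟩ := Finset.card_eq_two.mp he2
  have haM : a ∈ M := heM (by simp)
  have hbM : b ∈ M := heM (by simp)
  set Q : Finset E3 := M \ {a, b} with hQ
  have hQcard : 2 ≤ Q.card := by
    rw [hQ, Finset.card_sdiff_of_subset heM, he2]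
    omega
  have hQδ : ∀ q ∈ Q, 0 < β₀ - ⟪u₀, q⟫ := by
    intro q hq
    have := hstrict q (Finset.mem_sdiff.mp hq).1 (Finset.mem_sdiff.mp hq).2
    linarith
  have hu₀ : u₀ ≠ 0 := by
    intro h
    obtain ⟨q, hq⟩ := Finset.card_pos.mp (by omega : 0 < Q.card)
    have h1 := hQδ q hq
    have h2 : ⟪u₀, q⟫ = 0 := by rw [h, inner_zero_left]
    have h3 : ⟪u₀, a⟫ = 0 := by rw [h, inner_zero_left]
    have h4 := hon a (by simp)
    rw [h3] at h4
    rw [h2, ← h4] at h1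
    linarith
  -- find z with ⟪z, b - a⟫ = 0 and z ∉ span {u₀}
  have hba : b - a ≠ 0 := sub_ne_zero.mpr (Ne.symm hab)
  obtain ⟨z, hz⟩ : ∃ z : E3, ⟪z, b - a⟫ = 0 ∧ z ∉ Submodule.span ℝ {u₀} := by
    by_contra hcon
    push_neg at hcon
    have hle : (Submodule.span ℝ {b - a})ᗮ ≤ Submodule.span ℝ {u₀} := by
      intro z hzmem
      refine hcon z ?_
      rw [Submodule.mem_orthogonal] at hzmem
      have := hzmem (b - a) (Submodule.subset_span rfl)
      rwa [real_inner_comm] at this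
    have h1 : Module.finrank ℝ ((Submodule.span ℝ {b - a})ᗮ : Submodule ℝ E3) = 2 := by
      have h := (Submodule.span ℝ {b - a}).finrank_add_finrank_orthogonal
      rw [finrank_span_singleton hba] at h
      rw [show Module.finrank ℝ (EuclideanSpace ℝ (Fin 3)) = 3 from by simp [finrank_euclideanSpace]] at h
      omega
    have h2 : Module.finrank ℝ (Submodule.span ℝ ({u₀} : Set E3)) = 1 := finrank_span_singleton hu₀
    have := Submodule.finrank_mono hle
    omega
  obtain ⟨hzba, hzspan⟩ := hz
  have hzb : ⟪z, b⟫ = ⟪z, a⟫ := by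
    rw [inner_sub_right] at hzba
    linarith
  set t : E3 → ℝ := fun q => (⟪z, q⟫ - ⟪z, a⟫) / (β₀ - ⟪u₀, q⟫) with ht
  -- injectivity of t on Q
  have htinj : ∀ q ∈ Q, ∀ q' ∈ Q, q ≠ q' → t q ≠ t q' := by
    intro q hq q' hq' hqq' htq
    set s : ℝ := t q with hs
    set U : E3 := z + s • u₀ with hU
    have hU0 : U ≠ 0 := by
      intro h
      apply hzspan
      rw [Submodule.mem_span_singleton]
      refine ⟨-s, ?_⟩
      rw [hU] at h
      rw [add_eq_zero_iff_eq_neg] at h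
      rw [h, neg_smul]
    have hval : ∀ q'' ∈ Q, t q'' = s → ⟪U, q''⟫ = ⟪z, a⟫ + s * β₀ := by
      intro q'' hq'' htq''
      have hδ := hQδ q'' hq''
      have h5 : ⟪z, q''⟫ - ⟪z, a⟫ = s * (β₀ - ⟪u₀, q''⟫) := by
        rw [← htq'', ht]
        exact (div_mul_cancel₀ _ (ne_of_gt hδ)).symm
      rw [mul_sub] at h5
      rw [hU, inner_add_left, real_inner_smul_left]
      linarith
    have hTcard : ({a, b, q, q'} : Finset E3).card = 4 := by
      have hqa : q ≠ a := by
        intro h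
        have := (Finset.mem_sdiff.mp hq).2
        rw [h] at this
        simp at this
      have hqb : q ≠ b := by
        intro h
        have := (Finset.mem_sdiff.mp hq).2
        rw [h] at this
        simp at this
      have hq'a : q' ≠ a := by
        intro h
        have := (Finset.mem_sdiff.mp hq').2
        rw [h] at this
        simp at this
      have hq'b : q' ≠ b := by
        intro h
        have := (Finset.mem_sdiff.mp hq').2
        rw [h] at this
        simp at this
      rw [Finset.card_insert_of_notMem (by simp [hab, Ne.symm hqa, Ne.symm hq'a]),
          Finset.card_insert_of_notMem (by simp [Ne.symm hqb, Ne.symm hq'b]),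
          Finset.card_insert_of_notMem (by simp [hqq'])]
      simp
    have hTM : ({a, b, q, q'} : Finset E3) ⊆ M := by
      intro x hx
      simp only [Finset.mem_insert, Finset.mem_singleton] at hx
      rcases hx with rfl | rfl | rfl | rfl
      · exact haM
      · exact hbM
      · exact (Finset.mem_sdiff.mp hq).1
      · exact (Finset.mem_sdiff.mp hq').1
    have := hplane U (⟪z, a⟫ + s * β₀) hU0 _ hTM ?_
    · omega
    intro x hx
    simp only [Finset.mem_insert, Finset.mem_singleton] at hx
    have hUa : ⟪U, a⟫ = ⟪z, a⟫ + s * β₀ := by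
      rw [hU, inner_add_left, real_inner_smul_left, hon a (by simp)]
    have hUb : ⟪U, b⟫ = ⟪z, a⟫ + s * β₀ := by
      rw [hU, inner_add_left, real_inner_smul_left, hon b (by simp), hzb]
    rcases hx with rfl | rfl | rfl | rfl
    · exact hUa
    · exact hUb
    · exact hval x hq rfl
    · exact hval x hq' (htq.symm ▸ rfl)
  have hgval : ∀ q ∈ Q, ⟪z, q⟫ - ⟪z, a⟫ = t q * (β₀ - ⟪u₀, q⟫) := by
    intro q hq
    rw [ht]
    exact (div_mul_cancel₀ _ (ne_of_gt (hQδ q hq))).symm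
  have hQne : Q.Nonempty := Finset.card_pos.mp (by omega)
  obtain ⟨qmax, hqmaxQ, hqmax⟩ := Q.exists_max_image t hQne
  obtain ⟨qmin, hqminQ, hqmin⟩ := Q.exists_min_image t hQne
  have hmaxmin : qmax ≠ qmin := by
    obtain ⟨q₁, hq₁, q₂, hq₂, h12⟩ := Finset.one_lt_card.mp (by omega : 1 < Q.card)
    intro h
    have e1 : t q₁ ≤ t qmax := hqmax q₁ hq₁
    have e2 : t qmin ≤ t q₁ := hqmin q₁ hq₁
    have e3 : t q₂ ≤ t qmax := hqmax q₂ hq₂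
    have e4 : t qmin ≤ t q₂ := hqmin q₂ hq₂
    rw [h] at e1 e3
    exact htinj q₁ hq₁ q₂ hq₂ h12 (by linarith)
  have hmemQ : ∀ q ∈ Q, q ∉ ({a, b} : Finset E3) := fun q hq => (Finset.mem_sdiff.mp hq).2
  have hfacet : ∀ q₀ ∈ Q, (∀ q ∈ Q, q ≠ q₀ → t q ≠ t q₀) →
      (∀ q ∈ Q, q ≠ q₀ → t q < t q₀) ∨ (∀ q ∈ Q, q ≠ q₀ → t q₀ < t q) →
      IsFacetF M (insert q₀ {a, b}) := by
    intro q₀ hq₀ huniq hside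
    have hq₀M : q₀ ∈ M := (Finset.mem_sdiff.mp hq₀).1
    have hq₀ab := hmemQ q₀ hq₀
    refine ⟨?_, ?_, ?_⟩
    · intro x hx
      rcases Finset.mem_insert.mp hx with rfl | hx
      · exact hq₀M
      · exact heM hx
    · rw [Finset.card_insert_of_notMem hq₀ab, he2]
    · rcases hside with hs | hs
      · refine ⟨z + (t q₀) • u₀, ⟪z, a⟫ + (t q₀) * β₀, ?_, ?_⟩
        · intro x hx
          simp only [Finset.mem_insert, Finset.mem_singleton] at hx
          rcases hx with rfl | rfl | rfl
          · rw [inner_add_left, real_inner_smul_left]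
            have := hgval x hq₀
            have hd := hQδ x hq₀
            nlinarith [this]
          · rw [inner_add_left, real_inner_smul_left, hon _ (Finset.mem_insert_self _ _)]
          · rw [inner_add_left, real_inner_smul_left,
              hon _ (Finset.mem_insert_of_mem (Finset.mem_singleton_self _)), hzb]
        · intro x hxM hxf
          have hxab : x ∉ ({a, b} : Finset E3) := fun h => hxf (Finset.mem_insert_of_mem h)
          have hxQ : x ∈ Q := Finset.mem_sdiff.mpr ⟨hxM, hxab⟩
          have hxq₀ : x ≠ q₀ := fun h => hxf (h ▸ Finset.mem_insert_self _ _)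
          have hlt : t x < t q₀ := hs x hxQ hxq₀
          have hδ := hQδ x hxQ
          have hg := hgval x hxQ
          rw [inner_add_left, real_inner_smul_left]
          nlinarith [mul_pos (sub_pos.mpr hlt) hδ]
      · refine ⟨-z + (-(t q₀)) • u₀, -⟪z, a⟫ + (-(t q₀)) * β₀, ?_, ?_⟩
        · intro x hx
          simp only [Finset.mem_insert, Finset.mem_singleton] at hx
          rcases hx with rfl | rfl | rfl
          · rw [inner_add_left, real_inner_smul_left, inner_neg_left]
            have := hgval x hq₀
            have hd := hQδ x hq₀
            nlinarith [this]
          · rw [inner_add_left, real_inner_smul_left, inner_neg_left,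
              hon _ (Finset.mem_insert_self _ _)]
          · rw [inner_add_left, real_inner_smul_left, inner_neg_left,
              hon _ (Finset.mem_insert_of_mem (Finset.mem_singleton_self _)), hzb]
        · intro x hxM hxf
          have hxab : x ∉ ({a, b} : Finset E3) := fun h => hxf (Finset.mem_insert_of_mem h)
          have hxQ : x ∈ Q := Finset.mem_sdiff.mpr ⟨hxM, hxab⟩
          have hxq₀ : x ≠ q₀ := fun h => hxf (h ▸ Finset.mem_insert_self _ _)
          have hlt : t q₀ < t x := hs x hxQ hxq₀
          have hδ := hQδ x hxQ
          have hg := hgval x hxQ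
          rw [inner_add_left, real_inner_smul_left, inner_neg_left]
          nlinarith [mul_pos (sub_pos.mpr hlt) hδ]
  have hf₁ : IsFacetF M (insert qmax {a, b}) := by
    refine hfacet qmax hqmaxQ (fun q hq hne => htinj q hq qmax hqmaxQ hne) (Or.inl ?_)
    intro q hq hne
    exact lt_of_le_of_ne (hqmax q hq) (htinj q hq qmax hqmaxQ hne)
  have hf₂ : IsFacetF M (insert qmin {a, b}) := by
    refine hfacet qmin hqminQ (fun q hq hne => htinj q hq qmin hqminQ hne) (Or.inr ?_)
    intro q hq hne
    exact lt_of_le_of_ne (hqmin q hq) (Ne.symm (htinj q hq qmin hqminQ hne))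
  refine ⟨insert qmax {a, b}, insert qmin {a, b}, hf₁, hf₂,
    Finset.subset_insert _ _, Finset.subset_insert _ _, ?_⟩
  intro h
  have : qmax ∈ insert qmin ({a, b} : Finset E3) := h ▸ Finset.mem_insert_self _ _
  rcases Finset.mem_insert.mp this with h1 | h1
  · exact hmaxmin h1
  · exact hmemQ qmax hqmaxQ h1

set_option maxHeartbeats 1000000 in
lemma crossing_le_two
    (hplane : ∀ (u : E3) (β : ℝ), u ≠ 0 → ∀ T ⊆ M, (∀ x ∈ T, ⟪u, x⟫ = β) → T.card ≤ 3)
    (hM : 4 ≤ M.card) {w v : E3} (hvM : v ∈ M)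
    (hwinj : ∀ x ∈ M, ∀ y ∈ M, ⟪w, x⟫ = ⟪w, y⟫ → x = y)
    (f : Fin 3 → Finset E3)
    (hfac : ∀ i, IsFacetF M (f i))
    (hvf : ∀ i, v ∈ f i)
    (hcross : ∀ i, ∃ x ∈ f i, ∃ y ∈ f i, ⟪w, x⟫ < ⟪w, v⟫ ∧ ⟪w, v⟫ < ⟪w, y⟫)
    (hdist : ∀ i j, i ≠ j → f i ≠ f j) : False := by
  classical
  choose x hxf y hyf hwx hwy using hcross
  choose u β hon hlt using fun i => (hfac i).2.2
  have hxM : ∀ i, x i ∈ M := fun i => (hfac i).1 (hxf i)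
  have hyM : ∀ i, y i ∈ M := fun i => (hfac i).1 (hyf i)
  have hxv : ∀ i, x i ≠ v := fun i h => absurd (h ▸ hwx i) (lt_irrefl _)
  have hyv : ∀ i, y i ≠ v := fun i h => absurd (h ▸ hwy i) (lt_irrefl _)
  have hxy : ∀ i, x i ≠ y i := fun i h => absurd (h ▸ (hwx i).trans (hwy i)) (lt_irrefl _)
  have hfeq : ∀ i, f i = {v, x i, y i} := by
    intro i
    refine (Finset.eq_of_subset_of_card_le ?_ ?_).symm
    · intro z hz
      simp only [Finset.mem_insert, Finset.mem_singleton] at hz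
      rcases hz with rfl | rfl | rfl
      · exact hvf i
      · exact hxf i
      · exact hyf i
    · rw [(hfac i).2.1]
      rw [Finset.card_insert_of_notMem (by simp [Ne.symm (hxv i), Ne.symm (hyv i)]),
          Finset.card_insert_of_notMem (by simp [hxy i])]
      simp
  set L : E3 → ℝ := fun z => ⟪w, z⟫ with hL
  set s : Fin 3 → ℝ := fun i => (L v - L (x i)) / (L (y i) - L (x i)) with hs
  have hden : ∀ i, 0 < L (y i) - L (x i) := fun i => by
    have := (hwx i).trans (hwy i)
    simp only [hL]
    linarith
  have hs0 : ∀ i, 0 < s i := fun i => div_pos (by have := hwx i; simp only [hL]; linarith) (hden i)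
  have hs1 : ∀ i, s i < 1 := fun i => by
    rw [hs, div_lt_one (hden i)]
    have := hwy i
    simp only [hL]
    linarith
  set p : Fin 3 → E3 := fun i => x i + s i • (y i - x i) with hp
  have hpcombo : ∀ i, p i = (1 - s i) • x i + s i • y i := by
    intro i
    rw [hp]
    module
  have hwd : ∀ i, ⟪w, p i - v⟫ = 0 := by
    intro i
    rw [inner_sub_right]
    simp only [hp]
    rw [inner_add_right, real_inner_smul_right, inner_sub_right]
    have : s i * (L (y i) - L (x i)) = L v - L (x i) := by
      rw [hs]
      exact div_mul_cancel₀ _ (ne_of_gt (hden i))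
    simp only [hL] at this
    linarith
  set d : Fin 3 → E3 := fun i => p i - v with hd
  set lam : Fin 3 → Fin 3 → ℝ := fun i j => ⟪u i, d j⟫ with hlam
  have hval : ∀ i j, lam i j = (1 - s j) * (⟪u i, x j⟫ - β i) + s j * (⟪u i, y j⟫ - β i) := by
    intro i j
    rw [hlam]
    simp only [hd]
    rw [inner_sub_right, hpcombo j, inner_add_right, real_inner_smul_right, real_inner_smul_right,
      hon i v (hvf i)]
    ring
  have hxle : ∀ i j, ⟪u i, x j⟫ - β i ≤ 0 := by
    intro i j
    by_cases h : x j ∈ f i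
    · rw [hon i _ h]; linarith
    · have := hlt i _ (hxM j) h; linarith
  have hyle : ∀ i j, ⟪u i, y j⟫ - β i ≤ 0 := by
    intro i j
    by_cases h : y j ∈ f i
    · rw [hon i _ h]; linarith
    · have := hlt i _ (hyM j) h; linarith
  have hle : ∀ i j, lam i j ≤ 0 := by
    intro i j
    rw [hval]
    have h1 := hxle i j
    have h2 := hyle i j
    have h3 := hs0 j
    have h4 := hs1 j
    nlinarith
  have hdiag : ∀ i, lam i i = 0 := by
    intro i
    rw [hval]
    rw [hon i _ (hxf i), hon i _ (hyf i)]
    ring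
  have key : ∀ i j, i ≠ j → lam i j ≠ 0 := by
    intro i j hij h0
    rw [hval] at h0
    obtain ⟨hx0, hy0⟩ := sq_combo_zero (hxle i j) (hyle i j) (hs0 j) (hs1 j) h0
    have hxin : x j ∈ f i := by
      by_contra h
      have := hlt i _ (hxM j) h
      linarith
    have hyin : y j ∈ f i := by
      by_contra h
      have := hlt i _ (hyM j) h
      linarith
    rw [hfeq i] at hxin hyin
    simp only [Finset.mem_insert, Finset.mem_singleton] at hxin hyin
    have hxx : x j = x i := by
      rcases hxin with h | h | h
      · exact absurd (h ▸ hwx j) (lt_irrefl _)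
      · exact h
      · exfalso
        have h1 := hwx j
        have h2 := hwy i
        rw [h] at h1
        linarith
    have hyy : y j = y i := by
      rcases hyin with h | h | h
      · exact absurd (h ▸ hwy j) (lt_irrefl _)
      · exfalso
        have h1 := hwy j
        have h2 := hwx i
        rw [h] at h1
        linarith
      · exact h
    exact hdist i j hij (by rw [hfeq i, hfeq j, hxx, hyy])
  have hd0 : ∀ i, d i ≠ 0 := by
    intro i h
    have hvp : v - x i = s i • (y i - x i) := by
      have : p i - v = 0 := h
      rw [hp] at this
      have h2 : x i + s i • (y i - x i) = v := by
        rw [sub_eq_zero] at this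
        exact this
      rw [← h2]
      module
    exact noncollinear hplane hM (hxM i) (hyM i) hvM (hxy i) (hxv i) (hyv i) (s i) hvp
  have hpar : ∀ i j, i ≠ j → ∀ c : ℝ, d j ≠ c • d i := by
    intro i j hij c h
    apply key i j hij
    simp only [hlam]
    rw [h, real_inner_smul_right]
    have := hdiag i
    simp only [hlam] at this
    rw [this, mul_zero]
  have hw0 : w ≠ 0 := by
    intro h
    have := hwx 0
    rw [h] at this
    simp at this
  have hli : LinearIndependent ℝ ![d 0, d 1] := by
    rw [linearIndependent_fin2]
    constructor
    · simp only [Matrix.cons_val_one, Matrix.head_cons]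
      exact hd0 1
    · intro c
      simp only [Matrix.cons_val_zero, Matrix.cons_val_one, Matrix.head_cons]
      exact (hpar 1 0 (by decide) c).symm
  obtain ⟨a, b, hab⟩ := mem_span_pair_of_ker hw0 (hwd 0) (hwd 1) (hwd 2) hli
  have ha0 : a ≠ 0 := by
    intro h
    rw [h, zero_smul, zero_add] at hab
    exact hpar 1 2 (by decide) b hab.symm
  have hb0 : b ≠ 0 := by
    intro h
    rw [h, zero_smul, add_zero] at hab
    exact hpar 0 2 (by decide) a hab.symm
  have hlam02 : lam 0 2 = b * lam 0 1 := by
    simp only [hlam]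
    rw [show d 2 = a • d 0 + b • d 1 from hab.symm]
    rw [inner_add_right, real_inner_smul_right, real_inner_smul_right]
    have h00 := hdiag 0
    simp only [hlam] at h00
    rw [h00]
    ring
  have hlam12 : lam 1 2 = a * lam 1 0 := by
    simp only [hlam]
    rw [show d 2 = a • d 0 + b • d 1 from hab.symm]
    rw [inner_add_right, real_inner_smul_right, real_inner_smul_right]
    have h11 := hdiag 1
    simp only [hlam] at h11
    rw [h11]
    ring
  have hbpos : 0 < b := by
    rcases lt_trichotomy b 0 with h | h | h
    · exfalso
      apply key 0 2 (by decide)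
      have h1 := hle 0 2
      have h2 := hle 0 1
      nlinarith [hlam02]
    · exact absurd h hb0
    · exact h
  have hapos : 0 < a := by
    rcases lt_trichotomy a 0 with h | h | h
    · exfalso
      apply key 1 2 (by decide)
      have h1 := hle 1 2
      have h2 := hle 1 0
      nlinarith [hlam12]
    · exact absurd h ha0
    · exact h
  have hlam22 : lam 2 2 = a * lam 2 0 + b * lam 2 1 := by
    simp only [hlam]
    rw [show d 2 = a • d 0 + b • d 1 from hab.symm]
    rw [inner_add_right, real_inner_smul_right, real_inner_smul_right]
  have h22 := hdiag 2
  have h20 := hle 2 0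
  have h21 := hle 2 1
  have : lam 2 0 = 0 := by nlinarith [hlam22]
  exact key 2 0 (by decide) this

open scoped Classical in
set_option maxHeartbeats 1000000 in
lemma edge_bound (M : Finset E3) (hM : 4 ≤ M.card)
    (hplane : ∀ (u : E3) (β : ℝ), u ≠ 0 → ∀ T ⊆ M, (∀ x ∈ T, ⟪u, x⟫ = β) → T.card ≤ 3) :
    ((M.powersetCard 2).filter (IsEdgeF M)).card + 6 ≤ 3 * M.card := by
  -- generic linear functional injective on M
  obtain ⟨w, hw⟩ := exists_generic (((M ×ˢ M).filter (fun p => p.1 ≠ p.2)).image (fun p => p.1 - p.2))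
    (by
      intro z hz
      obtain ⟨p, hp, hpz⟩ := Finset.mem_image.mp hz
      have := (Finset.mem_filter.mp hp).2
      rw [← hpz]
      exact sub_ne_zero.mpr this)
  have hwinj : ∀ x ∈ M, ∀ y ∈ M, ⟪w, x⟫ = ⟪w, y⟫ → x = y := by
    intro x hx y hy hxy
    by_contra hne
    refine hw (x - y) ?_ ?_
    · exact Finset.mem_image.mpr ⟨(x, y), Finset.mem_filter.mpr ⟨Finset.mem_product.mpr ⟨hx, hy⟩, hne⟩, rfl⟩
    · rw [inner_sub_right]
      linarith
  set L : E3 → ℝ := fun z => ⟪w, z⟫ with hL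
  set Fct : Finset (Finset E3) := (M.powersetCard 3).filter (IsFacetF M) with hFct
  set Edg : Finset (Finset E3) := (M.powersetCard 2).filter (IsEdgeF M) with hEdg
  have memFct : ∀ f, f ∈ Fct ↔ IsFacetF M f := by
    intro f
    rw [hFct, Finset.mem_filter, Finset.mem_powersetCard]
    constructor
    · exact fun h => h.2
    · exact fun h => ⟨⟨h.1, h.2.1⟩, h⟩
  have memEdg : ∀ e, e ∈ Edg ↔ IsEdgeF M e := by
    intro e
    rw [hEdg, Finset.mem_filter, Finset.mem_powersetCard]
    constructor
    · exact fun h => h.2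
    · exact fun h => ⟨⟨h.1, h.2.1⟩, h⟩
  -- step A : 2 * |Edg| ≤ 3 * |Fct|
  have hstepA : 2 * Edg.card ≤ 3 * Fct.card := by
    have hdc : ∑ f ∈ Fct, (Edg.filter (· ⊆ f)).card = ∑ e ∈ Edg, (Fct.filter (e ⊆ ·)).card := by
      simp only [Finset.card_filter]
      rw [Finset.sum_comm]
    have hper_f : ∀ f ∈ Fct, (Edg.filter (· ⊆ f)).card = 3 := by
      intro f hf
      have hf3 := ((memFct f).mp hf).2.1
      have heq : Edg.filter (· ⊆ f) = f.powersetCard 2 := by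
        ext e
        rw [Finset.mem_filter, Finset.mem_powersetCard, memEdg]
        constructor
        · exact fun h => ⟨h.2, h.1.2.1⟩
        · intro h
          exact ⟨facet_pair_edge hplane hM ((memFct f).mp hf) h.1 h.2, h.1⟩
      rw [heq, Finset.card_powersetCard, hf3]
      rfl
    have hper_e : ∀ e ∈ Edg, 2 ≤ (Fct.filter (e ⊆ ·)).card := by
      intro e he
      obtain ⟨f₁, f₂, hf₁, hf₂, he₁, he₂, hne⟩ := edge_two_facets hplane hM ((memEdg e).mp he)
      rw [show (2:ℕ) = 1 + 1 from rfl, Nat.add_one_le_iff, Finset.one_lt_card]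
      refine ⟨f₁, ?_, f₂, ?_, hne⟩
      · exact Finset.mem_filter.mpr ⟨(memFct f₁).mpr hf₁, he₁⟩
      · exact Finset.mem_filter.mpr ⟨(memFct f₂).mpr hf₂, he₂⟩
    calc 2 * Edg.card = ∑ _e ∈ Edg, 2 := by rw [Finset.sum_const, smul_eq_mul, mul_comm]
    _ ≤ ∑ e ∈ Edg, (Fct.filter (e ⊆ ·)).card := Finset.sum_le_sum hper_e
    _ = ∑ f ∈ Fct, (Edg.filter (· ⊆ f)).card := hdc.symm
    _ = ∑ _f ∈ Fct, 3 := Finset.sum_congr rfl hper_f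
    _ = 3 * Fct.card := by rw [Finset.sum_const, smul_eq_mul, mul_comm]
  -- step B : |Fct| + 4 ≤ 2 * |M|
  have hMne : M.Nonempty := Finset.card_pos.mp (by omega)
  obtain ⟨vmax, hvmaxM, hvmax⟩ := M.exists_max_image L hMne
  obtain ⟨vmin, hvminM, hvmin⟩ := M.exists_min_image L hMne
  have hLinj : ∀ x ∈ M, ∀ y ∈ M, x ≠ y → L x ≠ L y := by
    intro x hx y hy hne hLeq
    exact hne (hwinj x hx y hy hLeq)
  have hvv : vmax ≠ vmin := by
    obtain ⟨a, ha, b, hb, hab⟩ := Finset.one_lt_card.mp (by omega : 1 < M.card)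
    intro h
    apply hLinj a ha b hb hab
    have h1 := hvmax a ha
    have h2 := hvmin a ha
    have h3 := hvmax b hb
    have h4 := hvmin b hb
    rw [h] at h1 h3
    linarith
  set mid : Finset E3 → E3 := fun f =>
    if h : ∃ v ∈ f, (∃ x ∈ f, L x < L v) ∧ (∃ y ∈ f, L v < L y) then h.choose else 0 with hmid
  have hmidspec : ∀ f ∈ Fct, mid f ∈ f ∧ (∃ x ∈ f, L x < L (mid f)) ∧ (∃ y ∈ f, L (mid f) < L y) := by
    intro f hf
    have hfM : f ⊆ M := ((memFct f).mp hf).1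
    have hf3 : f.card = 3 := ((memFct f).mp hf).2.1
    have hfne : f.Nonempty := Finset.card_pos.mp (by omega)
    obtain ⟨xm, hxm, hxmle⟩ := f.exists_min_image L hfne
    obtain ⟨ym, hym, hymle⟩ := f.exists_max_image L hfne
    have hxym : xm ≠ ym := by
      obtain ⟨a, ha, b, hb, hab⟩ := Finset.one_lt_card.mp (by omega : 1 < f.card)
      intro h
      apply hLinj a (hfM ha) b (hfM hb) hab
      have h1 := hxmle a ha
      have h2 := hymle a ha
      have h3 := hxmle b hb
      have h4 := hymle b hb
      rw [h] at h1 h3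
      linarith
    have hbne : ((f.erase xm).erase ym).Nonempty := by
      rw [← Finset.card_pos, Finset.card_erase_of_mem (Finset.mem_erase.mpr ⟨Ne.symm hxym, hym⟩),
        Finset.card_erase_of_mem hxm, hf3]
      norm_num
    obtain ⟨b, hb⟩ := hbne
    have hbym : b ≠ ym := (Finset.mem_erase.mp hb).1
    have hbxm : b ≠ xm := (Finset.mem_erase.mp (Finset.mem_erase.mp hb).2).1
    have hbf : b ∈ f := (Finset.mem_erase.mp (Finset.mem_erase.mp hb).2).2
    have hex : ∃ v ∈ f, (∃ x ∈ f, L x < L v) ∧ (∃ y ∈ f, L v < L y) := by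
      refine ⟨b, hbf, ⟨xm, hxm, ?_⟩, ⟨ym, hym, ?_⟩⟩
      · exact lt_of_le_of_ne (hxmle b hbf) (hLinj xm (hfM hxm) b (hfM hbf) (Ne.symm hbxm))
      · exact lt_of_le_of_ne (hymle b hbf) (hLinj b (hfM hbf) ym (hfM hym) hbym)
    rw [hmid]
    simp only [dif_pos hex]
    exact hex.choose_spec
  have hmidmem : ∀ f ∈ Fct, mid f ∈ M := fun f hf => ((memFct f).mp hf).1 (hmidspec f hf).1
  have hfib : Fct.card = ∑ v ∈ M, (Fct.filter (fun f => mid f = v)).card :=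
    Finset.card_eq_sum_card_fiberwise hmidmem
  have hfibmax : (Fct.filter (fun f => mid f = vmax)).card = 0 := by
    rw [Finset.card_eq_zero, Finset.filter_eq_empty_iff]
    intro f hf hmf
    obtain ⟨-, -, y, hy, hvy⟩ := hmidspec f hf
    rw [hmf] at hvy
    have := hvmax y (((memFct f).mp hf).1 hy)
    linarith
  have hfibmin : (Fct.filter (fun f => mid f = vmin)).card = 0 := by
    rw [Finset.card_eq_zero, Finset.filter_eq_empty_iff]
    intro f hf hmf
    obtain ⟨-, ⟨x, hx, hvx⟩, -⟩ := hmidspec f hf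
    rw [hmf] at hvx
    have := hvmin x (((memFct f).mp hf).1 hx)
    linarith
  have hfibgen : ∀ v ∈ M, (Fct.filter (fun f => mid f = v)).card ≤ 2 := by
    intro v hv
    by_contra hcon
    push_neg at hcon
    obtain ⟨f₁, f₂, f₃, hf₁, hf₂, hf₃, h12, h13, h23⟩ := Finset.two_lt_card_iff.mp hcon
    have hm₁ := Finset.mem_filter.mp hf₁
    have hm₂ := Finset.mem_filter.mp hf₂
    have hm₃ := Finset.mem_filter.mp hf₃
    refine crossing_le_two hplane hM hv hwinj ![f₁, f₂, f₃] ?_ ?_ ?_ ?_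
    · intro i
      fin_cases i <;> simp only [Matrix.cons_val_zero, Matrix.cons_val_one, Matrix.head_cons,
        Matrix.cons_val_two, Matrix.tail_cons] <;>
        [exact (memFct f₁).mp hm₁.1; exact (memFct f₂).mp hm₂.1; exact (memFct f₃).mp hm₃.1]
    · intro i
      fin_cases i <;> simp only [Matrix.cons_val_zero, Matrix.cons_val_one, Matrix.head_cons,
        Matrix.cons_val_two, Matrix.tail_cons] <;>
        [exact hm₁.2 ▸ (hmidspec f₁ hm₁.1).1; exact hm₂.2 ▸ (hmidspec f₂ hm₂.1).1;
         exact hm₃.2 ▸ (hmidspec f₃ hm₃.1).1]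
    · intro i
      have hc : ∀ g ∈ Fct, mid g = v →
          ∃ x ∈ g, ∃ y ∈ g, ⟪w, x⟫ < ⟪w, v⟫ ∧ ⟪w, v⟫ < ⟪w, y⟫ := by
        intro g hg hgv
        obtain ⟨-, ⟨x, hx, hvx⟩, ⟨y, hy, hvy⟩⟩ := hmidspec g hg
        rw [hgv] at hvx hvy
        exact ⟨x, hx, y, hy, hvx, hvy⟩
      fin_cases i <;> simp only [Matrix.cons_val_zero, Matrix.cons_val_one, Matrix.head_cons,
        Matrix.cons_val_two, Matrix.tail_cons] <;>
        [exact hc f₁ hm₁.1 hm₁.2; exact hc f₂ hm₂.1 hm₂.2; exact hc f₃ hm₃.1 hm₃.2]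
    · intro i j hij
      fin_cases i <;> fin_cases j <;> simp only [Matrix.cons_val_zero, Matrix.cons_val_one,
        Matrix.head_cons, Matrix.cons_val_two, Matrix.tail_cons] <;>
        first
          | exact absurd rfl hij
          | exact h12 | exact h13 | exact h23
          | exact Ne.symm h12 | exact Ne.symm h13 | exact Ne.symm h23
  have hstepB : Fct.card + 4 ≤ 2 * M.card := by
    have hsum : Fct.card ≤ ∑ v ∈ M, (if v = vmax ∨ v = vmin then 0 else 2) := by
      rw [hfib]
      refine Finset.sum_le_sum ?_
      intro v hv
      by_cases h1 : v = vmax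
      · subst h1
        simp [hfibmax]
      · by_cases h2 : v = vmin
        · subst h2
          simp [hfibmin]
        · rw [if_neg (by tauto)]
          exact hfibgen v hv
    have hflt : M.filter (fun v => ¬(v = vmax ∨ v = vmin)) = M \ {vmax, vmin} := by
      ext z
      simp only [Finset.mem_filter, Finset.mem_sdiff, Finset.mem_insert, Finset.mem_singleton,
        not_or]
    have hsub : ({vmax, vmin} : Finset E3) ⊆ M := by
      intro z hz
      simp only [Finset.mem_insert, Finset.mem_singleton] at hz
      rcases hz with rfl | rfl
      · exact hvmaxM
      · exact hvminM
    have hcard2 : ({vmax, vmin} : Finset E3).card = 2 := by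
      rw [Finset.card_insert_of_notMem (by simp [hvv]), Finset.card_singleton]
    have hsum2 : ∑ v ∈ M, (if v = vmax ∨ v = vmin then 0 else 2) = 2 * (M.card - 2) := by
      rw [Finset.sum_ite, hflt]
      simp only [Finset.sum_const, Finset.sum_const_zero, smul_eq_mul, zero_add]
      rw [Finset.card_sdiff_of_subset hsub, hcard2]
      omega
    omega
  omega


lemma mem_perp {u d : E3} (h : ⟪u, d⟫ = 0) : d ∈ (Submodule.span ℝ {u})ᗮ := by
  rw [Submodule.mem_orthogonal]
  intro v hv
  rw [Submodule.mem_span_singleton] at hv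
  obtain ⟨c, rfl⟩ := hv
  rw [real_inner_smul_left, h, mul_zero]

lemma finrank_perp {u : E3} (hu : u ≠ 0) :
    Module.finrank ℝ ((Submodule.span ℝ {u})ᗮ : Submodule ℝ E3) = 2 := by
  have h := (Submodule.span ℝ {u}).finrank_add_finrank_orthogonal
  rw [finrank_span_singleton hu] at h
  rw [show Module.finrank ℝ (EuclideanSpace ℝ (Fin 3)) = 3 from by simp [finrank_euclideanSpace]] at h
  omega

lemma plane_card_le_of_affineIndep {S : Set E3}
    (hgen₁ : ∀ T : Set E3, T ⊆ S → T.ncard = 4 → AffineIndependent ℝ ((↑) : T → E3))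
    (u : E3) (β : ℝ) (hu : u ≠ 0) (T : Finset E3) (hTS : ↑T ⊆ S)
    (hT : ∀ x ∈ T, ⟪u, x⟫ = β) : T.card ≤ 3 := by
  by_contra hcon
  push_neg at hcon
  obtain ⟨T₄, hT₄T, hT₄card⟩ := Finset.exists_subset_card_eq (by omega : 4 ≤ T.card)
  have hai := hgen₁ ↑T₄ ((Finset.coe_subset.mpr hT₄T).trans hTS)
    (by rw [Set.ncard_coe_finset, hT₄card])
  have hcard4 : Fintype.card ↥(↑T₄ : Set E3) = 3 + 1 := by simp [hT₄card]
  have hrank := hai.finrank_vectorSpan hcard4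
  have hle : vectorSpan ℝ (Set.range ((↑) : ↥(↑T₄ : Set E3) → E3)) ≤ (Submodule.span ℝ {u})ᗮ := by
    rw [Subtype.range_coe]
    apply Submodule.span_le.mpr
    rintro z hz
    obtain ⟨x, hx, y, hy, rfl⟩ := Set.mem_vsub.mp hz
    have hxT : x ∈ T := hT₄T (by exact_mod_cast hx)
    have hyT : y ∈ T := hT₄T (by exact_mod_cast hy)
    apply mem_perp
    rw [vsub_eq_sub, inner_sub_right, hT x hxT, hT y hyT, sub_self]
  have := Submodule.finrank_mono hle
  rw [hrank, finrank_perp hu] at this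
  omega

def inv3 (p q : E3) : E3 := (‖q - p‖ ^ 2)⁻¹ • (q - p)

lemma inv3_norm_sq_pos {p q : E3} (hq : q ≠ p) : (0:ℝ) < ‖q - p‖ ^ 2 := by
  have : q - p ≠ 0 := sub_ne_zero.mpr hq
  exact pow_pos (norm_pos_iff.mpr this) 2

lemma inv3_inj {p q q' : E3} (hq : q ≠ p) (hq' : q' ≠ p) (h : inv3 p q = inv3 p q') : q = q' := by
  have h1 : ‖inv3 p q‖ = ‖q - p‖⁻¹ := by
    rw [inv3, norm_smul]
    rw [show ‖(‖q - p‖ ^ 2)⁻¹‖ = (‖q - p‖ ^ 2)⁻¹ from abs_of_pos (inv_pos.mpr (inv3_norm_sq_pos hq))]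
    have h0 : ‖q - p‖ ≠ 0 := norm_ne_zero_iff.mpr (sub_ne_zero.mpr hq)
    field_simp
  have h2 : ‖inv3 p q'‖ = ‖q' - p‖⁻¹ := by
    rw [inv3, norm_smul]
    rw [show ‖(‖q' - p‖ ^ 2)⁻¹‖ = (‖q' - p‖ ^ 2)⁻¹ from abs_of_pos (inv_pos.mpr (inv3_norm_sq_pos hq'))]
    have h0 : ‖q' - p‖ ≠ 0 := norm_ne_zero_iff.mpr (sub_ne_zero.mpr hq')
    field_simp
  have h0 : ‖q - p‖ ≠ 0 := norm_ne_zero_iff.mpr (sub_ne_zero.mpr hq)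
  have h0' : ‖q' - p‖ ≠ 0 := norm_ne_zero_iff.mpr (sub_ne_zero.mpr hq')
  have hnorm : ‖q - p‖ = ‖q' - p‖ := by
    have := h1 ▸ h2 ▸ congrArg norm h
    exact inv_injective this
  have h3 : q - p = q' - p := by
    have e1 : (‖q - p‖ ^ 2) • inv3 p q = q - p := by
      rw [inv3, smul_inv_smul₀ (ne_of_gt (inv3_norm_sq_pos hq))]
    have e2 : (‖q' - p‖ ^ 2) • inv3 p q' = q' - p := by
      rw [inv3, smul_inv_smul₀ (ne_of_gt (inv3_norm_sq_pos hq'))]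
    rw [← e1, ← e2, h, hnorm]
  have := sub_left_injective.eq_iff.mp h3
  exact this

lemma dist_sq_diff {p q x : E3} :
    (dist q x) ^ 2 - (dist p x) ^ 2 = ‖q - p‖ ^ 2 - 2 * ⟪x - p, q - p⟫ := by
  rw [dist_eq_norm, dist_eq_norm]
  have h1 : q - x = (q - p) - (x - p) := by abel
  rw [h1, @norm_sub_sq_real]
  have h2 : ‖p - x‖ = ‖x - p‖ := norm_sub_rev p x
  rw [h2]
  rw [real_inner_comm]
  ring

lemma inv3_inner_eq {p q x : E3} (hq : q ≠ p) :
    ⟪(2:ℝ) • (x - p), inv3 p q⟫ = 2 * ⟪x - p, q - p⟫ / ‖q - p‖ ^ 2 := by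
  rw [inv3, real_inner_smul_left, real_inner_smul_right]
  field_simp

lemma inv3_inner_lt_one {p q x : E3} (hq : q ≠ p) (h : dist p x < dist q x) :
    ⟪(2:ℝ) • (x - p), inv3 p q⟫ < 1 := by
  have hsq : (dist p x) ^ 2 < (dist q x) ^ 2 := by
    have h0 : (0:ℝ) ≤ dist p x := dist_nonneg
    nlinarith
  have hd := @dist_sq_diff p q x
  have hn := inv3_norm_sq_pos hq
  rw [inv3_inner_eq hq, div_lt_one hn]
  nlinarith

lemma inv3_inner_eq_one {p q x : E3} (hq : q ≠ p) (h : dist q x = dist p x) :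
    ⟪(2:ℝ) • (x - p), inv3 p q⟫ = 1 := by
  have hd := @dist_sq_diff p q x
  rw [h] at hd
  have hn := inv3_norm_sq_pos hq
  rw [inv3_inner_eq hq, div_eq_one_iff_eq (ne_of_gt hn)]
  nlinarith

lemma inv3_plane {p q : E3} (hq : q ≠ p) {u : E3} {β : ℝ} (h : ⟪u, inv3 p q⟫ = β) :
    ⟪u, q - p⟫ = β * ‖q - p‖ ^ 2 := by
  rw [inv3, real_inner_smul_right] at h
  have hn := inv3_norm_sq_pos hq
  rw [inv_mul_eq_div, div_eq_iff (ne_of_gt hn)] at h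
  linarith [h]

lemma inv3_sphere {p q : E3} (hq : q ≠ p) {u : E3} {β : ℝ} (hβ : β ≠ 0)
    (h : ⟪u, q - p⟫ = β * ‖q - p‖ ^ 2) :
    dist q (p + ((2 * β)⁻¹) • u) = ‖((2 * β)⁻¹) • u‖ := by
  set c : E3 := ((2 * β)⁻¹) • u with hc
  have h1 : dist q (p + c) = ‖q - p - c‖ := by
    rw [dist_eq_norm]
    congr 1
    abel
  have h2 : ‖q - p - c‖ ^ 2 = ‖c‖ ^ 2 := by
    rw [@norm_sub_sq_real]
    have h3 : ⟪q - p, c⟫ = ‖q - p‖ ^ 2 / 2 := by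
      rw [hc, real_inner_smul_right, real_inner_comm, h]
      field_simp
    rw [h3]
    ring
  have h4 : (‖q - p - c‖ - ‖c‖) * (‖q - p - c‖ + ‖c‖) = 0 := by nlinarith
  rw [h1]
  rcases mul_eq_zero.mp h4 with h5 | h5
  · linarith
  · have h6 : (0:ℝ) ≤ ‖q - p - c‖ := norm_nonneg _
    have h7 : (0:ℝ) ≤ ‖c‖ := norm_nonneg _
    linarith

set_option maxHeartbeats 2000000 in
theorem card_delaunay_triangles_le (S : Set E3) (hS : S.Finite) (n : ℕ)
    (hcard : S.ncard = n) (hn : 5 ≤ n)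
    (hgen₁ : ∀ T : Set E3, T ⊆ S → T.ncard = 4 →
      AffineIndependent ℝ ((↑) : T → E3))
    (hgen₂ : ∀ T : Set E3, T ⊆ S → T.ncard = 5 →
      ¬ EuclideanGeometry.Cospherical T) :
    ({T : Set E3 | T ⊆ S ∧ T.ncard = 3 ∧ ∃ (x : E3) (r : ℝ),
        Metric.ball x r ∩ S = ∅ ∧ Metric.sphere x r ∩ S = T}.ncard : ℤ)
      ≤ (n : ℤ) ^ 2 - 3 * n := by
  classical
  set Sf : Finset E3 := hS.toFinset with hSf
  have hmemSf : ∀ z, z ∈ Sf ↔ z ∈ S := fun z => Set.Finite.mem_toFinset hS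
  have hSfcard : Sf.card = n := by
    rw [hSf, ← hcard]
    exact (Set.ncard_eq_toFinset_card _ hS).symm
  set Df : Finset (Finset E3) := (Sf.powersetCard 3).filter
    (fun T => ∃ (x : E3) (r : ℝ), Metric.ball x r ∩ S = ∅ ∧ Metric.sphere x r ∩ S = ↑T) with hDf
  have hmemDf : ∀ T, T ∈ Df ↔ (T ⊆ Sf ∧ T.card = 3 ∧
      ∃ (x : E3) (r : ℝ), Metric.ball x r ∩ S = ∅ ∧ Metric.sphere x r ∩ S = ↑T) := by
    intro T
    rw [hDf, Finset.mem_filter, Finset.mem_powersetCard]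
    tauto
  -- Step 1 : ncard of the set is at most Df.card
  have hstep1 : ({T : Set E3 | T ⊆ S ∧ T.ncard = 3 ∧ ∃ (x : E3) (r : ℝ),
      Metric.ball x r ∩ S = ∅ ∧ Metric.sphere x r ∩ S = T}).ncard ≤ Df.card := by
    have hsub : {T : Set E3 | T ⊆ S ∧ T.ncard = 3 ∧ ∃ (x : E3) (r : ℝ),
        Metric.ball x r ∩ S = ∅ ∧ Metric.sphere x r ∩ S = T} ⊆
        (fun (t : Finset E3) => (↑t : Set E3)) '' ↑Df := by
      rintro T ⟨hTS, hT3, x, r, hball, hsph⟩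
      have hTfin : T.Finite := hS.subset hTS
      refine ⟨hTfin.toFinset, ?_, by simp⟩
      rw [Finset.mem_coe, hmemDf]
      refine ⟨?_, ?_, x, r, hball, ?_⟩
      · intro z hz
        rw [Set.Finite.mem_toFinset] at hz
        exact (hmemSf z).mpr (hTS hz)
      · rw [← Set.ncard_eq_toFinset_card _ hTfin, hT3]
      · rw [Set.Finite.coe_toFinset]
        exact hsph
    calc ({T : Set E3 | T ⊆ S ∧ T.ncard = 3 ∧ ∃ (x : E3) (r : ℝ),
        Metric.ball x r ∩ S = ∅ ∧ Metric.sphere x r ∩ S = T}).ncard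
        ≤ ((fun (t : Finset E3) => (↑t : Set E3)) '' ↑Df).ncard :=
          Set.ncard_le_ncard hsub (Set.Finite.image _ (Finset.finite_toSet Df))
      _ ≤ (↑Df : Set (Finset E3)).ncard := Set.ncard_image_le (Finset.finite_toSet Df)
      _ = Df.card := Set.ncard_coe_finset Df
  -- Step 2 : double counting
  have hstep2 : ∑ p ∈ Sf, (Df.filter (fun T => p ∈ T)).card = 3 * Df.card := by
    have h1 : ∀ p, (Df.filter (fun T => p ∈ T)).card = ∑ T ∈ Df, if p ∈ T then 1 else 0 :=
      fun p => Finset.card_filter _ _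
    calc ∑ p ∈ Sf, (Df.filter (fun T => p ∈ T)).card
        = ∑ p ∈ Sf, ∑ T ∈ Df, (if p ∈ T then 1 else 0) := Finset.sum_congr rfl (fun p _ => h1 p)
      _ = ∑ T ∈ Df, ∑ p ∈ Sf, (if p ∈ T then 1 else 0) := Finset.sum_comm
      _ = ∑ T ∈ Df, T.card := by
          refine Finset.sum_congr rfl ?_
          intro T hT
          rw [← Finset.card_filter]
          congr 1
          ext z
          rw [Finset.mem_filter]
          exact ⟨fun h => h.2, fun h => ⟨((hmemDf T).mp hT).1 h, h⟩⟩
      _ = ∑ _T ∈ Df, 3 := Finset.sum_congr rfl (fun T hT => ((hmemDf T).mp hT).2.1)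
      _ = 3 * Df.card := by rw [Finset.sum_const, smul_eq_mul, mul_comm]
  -- Step 3 : pointwise bound
  have hstep3 : ∀ p ∈ Sf, (Df.filter (fun T => p ∈ T)).card + 9 ≤ 3 * n := by
    intro p hp
    have hpS : p ∈ S := (hmemSf p).mp hp
    have hinj : ∀ q ∈ Sf.erase p, ∀ q' ∈ Sf.erase p, inv3 p q = inv3 p q' → q = q' := by
      intro q hq q' hq' h
      exact inv3_inj (Finset.mem_erase.mp hq).1 (Finset.mem_erase.mp hq').1 h
    set N : Finset E3 := (Sf.erase p).image (inv3 p) with hN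
    have hNcard : N.card = n - 1 := by
      rw [hN, Finset.card_image_of_injOn hinj, Finset.card_erase_of_mem hp, hSfcard]
    have hNplane : ∀ (u : E3) (β : ℝ), u ≠ 0 → ∀ T ⊆ N, (∀ x ∈ T, ⟪u, x⟫ = β) → T.card ≤ 3 := by
      intro u β hu T hTN hT
      by_contra hcon
      push_neg at hcon
      set T₀ : Finset E3 := (Sf.erase p).filter (fun q => inv3 p q ∈ T) with hT₀
      have hT₀sub : T₀ ⊆ Sf.erase p := Finset.filter_subset _ _
      have him : T₀.image (inv3 p) = T := by
        ext z
        rw [Finset.mem_image]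
        constructor
        · rintro ⟨q, hq, rfl⟩
          exact (Finset.mem_filter.mp hq).2
        · intro hz
          obtain ⟨q, hq, rfl⟩ := Finset.mem_image.mp (hTN hz)
          exact ⟨q, Finset.mem_filter.mpr ⟨hq, hz⟩, rfl⟩
      have hT₀card : T₀.card = T.card := by
        rw [← him]
        exact (Finset.card_image_of_injOn
          (fun q hq q' hq' h => hinj q (hT₀sub hq) q' (hT₀sub hq') h)).symm
      have hT₀4 : 4 ≤ T₀.card := by omega
      have hplaneval : ∀ q ∈ T₀, ⟪u, q - p⟫ = β * ‖q - p‖ ^ 2 := by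
        intro q hq
        have hqp : q ≠ p := (Finset.mem_erase.mp (hT₀sub hq)).1
        exact inv3_plane hqp (hT (inv3 p q) ((Finset.mem_filter.mp hq).2))
      by_cases hβ : β = 0
      · subst hβ
        have hTin : ∀ q ∈ insert p T₀, ⟪u, q⟫ = ⟪u, p⟫ := by
          intro q hq
          rcases Finset.mem_insert.mp hq with rfl | hq
          · rfl
          · have h1 := hplaneval q hq
            rw [zero_mul, inner_sub_right] at h1
            linarith
        have hsubS : ↑(insert p T₀) ⊆ S := by
          intro z hz
          rcases Finset.mem_insert.mp (by exact_mod_cast hz) with rfl | hz2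
          · exact hpS
          · exact (hmemSf z).mp (Finset.mem_of_mem_erase (hT₀sub hz2))
        have hple := plane_card_le_of_affineIndep hgen₁ u (⟪u, p⟫) hu (insert p T₀) hsubS hTin
        have hpT₀ : p ∉ T₀ := fun h => (Finset.mem_erase.mp (hT₀sub h)).1 rfl
        rw [Finset.card_insert_of_notMem hpT₀] at hple
        omega
      · obtain ⟨T₄, hT₄sub, hT₄card⟩ := Finset.exists_subset_card_eq hT₀4
        have hpT₄ : p ∉ (↑T₄ : Set E3) := by
          intro h
          exact (Finset.mem_erase.mp (hT₀sub (hT₄sub (by exact_mod_cast h)))).1 rfl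
        have hsubS : insert p (↑T₄ : Set E3) ⊆ S := by
          intro z hz
          rcases Set.mem_insert_iff.mp hz with rfl | hz2
          · exact hpS
          · exact (hmemSf z).mp
              (Finset.mem_of_mem_erase (hT₀sub (hT₄sub (by exact_mod_cast hz2))))
        have hncard5 : (insert p (↑T₄ : Set E3)).ncard = 5 := by
          rw [Set.ncard_insert_of_notMem hpT₄ (Finset.finite_toSet T₄),
            Set.ncard_coe_finset, hT₄card]
        refine hgen₂ (insert p ↑T₄) hsubS hncard5
          ⟨p + ((2 * β)⁻¹) • u, ‖((2 * β)⁻¹) • u‖, ?_⟩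
        intro z hz
        rcases Set.mem_insert_iff.mp hz with rfl | hz2
        · rw [dist_eq_norm, show z - (z + ((2 * β)⁻¹) • u) = -(((2 * β)⁻¹) • u) from by abel,
            norm_neg]
        · have hzT₀ : z ∈ T₀ := hT₄sub (by exact_mod_cast hz2)
          have hzp : z ≠ p := (Finset.mem_erase.mp (hT₀sub hzT₀)).1
          exact inv3_sphere hzp hβ (hplaneval z hzT₀)
    have hedge := edge_bound N (by omega : 4 ≤ N.card) hNplane
    have hmap : ∀ T ∈ Df.filter (fun T => p ∈ T),
        (T.erase p).image (inv3 p) ∈ (N.powersetCard 2).filter (IsEdgeF N) := by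
      intro T hTf
      obtain ⟨hTDf, hpT⟩ := Finset.mem_filter.mp hTf
      obtain ⟨hTSf, hT3, x, r, hball, hsph⟩ := (hmemDf T).mp hTDf
      have hdist : ∀ b ∈ T, dist b x = r := by
        intro b hb
        have hbT : b ∈ (↑T : Set E3) := Finset.mem_coe.mpr hb
        rw [← hsph] at hbT
        exact Metric.mem_sphere.mp hbT.1
      have hdp : dist p x = r := hdist p hpT
      have heraseSub : T.erase p ⊆ Sf.erase p := Finset.erase_subset_erase p hTSf
      have hesub : (T.erase p).image (inv3 p) ⊆ N := Finset.image_subset_image heraseSub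
      have hecard : ((T.erase p).image (inv3 p)).card = 2 := by
        rw [Finset.card_image_of_injOn
          (fun q hq q' hq' h => hinj q (heraseSub hq) q' (heraseSub hq') h),
          Finset.card_erase_of_mem hpT, hT3]
      rw [Finset.mem_filter, Finset.mem_powersetCard]
      refine ⟨⟨hesub, hecard⟩, hesub, hecard, (2:ℝ) • (x - p), 1, ?_, ?_⟩
      · intro z hz
        obtain ⟨b, hb, rfl⟩ := Finset.mem_image.mp hz
        have hbp : b ≠ p := (Finset.mem_erase.mp hb).1
        exact inv3_inner_eq_one hbp (by rw [hdist b (Finset.mem_of_mem_erase hb), hdp])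
      · intro z hzN hze
        obtain ⟨q, hq, rfl⟩ := Finset.mem_image.mp hzN
        have hqp : q ≠ p := (Finset.mem_erase.mp hq).1
        have hqS : q ∈ S := (hmemSf q).mp (Finset.mem_of_mem_erase hq)
        have hqT : q ∉ T := by
          intro h
          exact hze (Finset.mem_image_of_mem _ (Finset.mem_erase.mpr ⟨hqp, h⟩))
        have hqsphere : dist q x ≠ r := by
          intro h
          apply hqT
          have : q ∈ Metric.sphere x r ∩ S := ⟨Metric.mem_sphere.mpr h, hqS⟩
          rw [hsph] at this
          exact Finset.mem_coe.mp this
        have hqball : ¬ dist q x < r := by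
          intro h
          have : q ∈ Metric.ball x r ∩ S := ⟨Metric.mem_ball.mpr h, hqS⟩
          rw [hball] at this
          exact this
        have : dist p x < dist q x := by
          rw [hdp]
          rcases lt_or_ge r (dist q x) with h | h
          · exact h
          · exact absurd (lt_of_le_of_ne h (by exact hqsphere)) hqball
        exact inv3_inner_lt_one hqp this
    have hinj2 : Set.InjOn (fun (T : Finset E3) => (T.erase p).image (inv3 p))
        ↑(Df.filter (fun T => p ∈ T)) := by
      intro T hT T' hT' heq
      simp only [Finset.coe_filter, Set.mem_setOf_eq] at hT hT'
      obtain ⟨hTDf, hpT⟩ := hT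
      obtain ⟨hT'Df, hpT'⟩ := hT'
      have hTSf : T ⊆ Sf := ((hmemDf T).mp hTDf).1
      have hT'Sf : T' ⊆ Sf := ((hmemDf T').mp hT'Df).1
      simp only at heq
      ext z
      constructor
      · intro hzT
        by_cases hzp : z = p
        · exact hzp ▸ hpT'
        · have h1 : inv3 p z ∈ (T'.erase p).image (inv3 p) := by
            rw [← heq]
            exact Finset.mem_image_of_mem _ (Finset.mem_erase.mpr ⟨hzp, hzT⟩)
          obtain ⟨q, hq, hq2⟩ := Finset.mem_image.mp h1
          have hqp : q ≠ p := (Finset.mem_erase.mp hq).1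
          have : q = z := inv3_inj hqp hzp hq2
          exact this ▸ Finset.mem_of_mem_erase hq
      · intro hzT'
        by_cases hzp : z = p
        · exact hzp ▸ hpT
        · have h1 : inv3 p z ∈ (T.erase p).image (inv3 p) := by
            rw [heq]
            exact Finset.mem_image_of_mem _ (Finset.mem_erase.mpr ⟨hzp, hzT'⟩)
          obtain ⟨q, hq, hq2⟩ := Finset.mem_image.mp h1
          have hqp : q ≠ p := (Finset.mem_erase.mp hq).1
          have : q = z := inv3_inj hqp hzp hq2
          exact this ▸ Finset.mem_of_mem_erase hq
    have hcardle : (Df.filter (fun T => p ∈ T)).card ≤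
        ((N.powersetCard 2).filter (IsEdgeF N)).card :=
      Finset.card_le_card_of_injOn _ hmap hinj2
    omega
  -- combine
  have hfinal : 3 * Df.card + 9 * n ≤ 3 * (n * n) := by
    have h2 : ∑ p ∈ Sf, ((Df.filter (fun T => p ∈ T)).card + 9) ≤ ∑ _p ∈ Sf, 3 * n :=
      Finset.sum_le_sum hstep3
    rw [Finset.sum_add_distrib, hstep2, Finset.sum_const, smul_eq_mul, hSfcard,
      Finset.sum_const, smul_eq_mul, hSfcard] at h2
    calc 3 * Df.card + 9 * n = 3 * Df.card + n * 9 := by ring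
      _ ≤ n * (3 * n) := h2
      _ = 3 * (n * n) := by ring
  have hD := hstep1
  have hle : ({T : Set E3 | T ⊆ S ∧ T.ncard = 3 ∧ ∃ (x : E3) (r : ℝ),
      Metric.ball x r ∩ S = ∅ ∧ Metric.sphere x r ∩ S = T}).ncard ≤ n * n - 3 * n := by
    omega
  have hcast : (({T : Set E3 | T ⊆ S ∧ T.ncard = 3 ∧ ∃ (x : E3) (r : ℝ),
      Metric.ball x r ∩ S = ∅ ∧ Metric.sphere x r ∩ S = T}).ncard : ℤ) ≤ (n : ℤ) * n - 3 * n := by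
    have h9 : 3 * n ≤ n * n := by nlinarith
    omega
  calc (({T : Set E3 | T ⊆ S ∧ T.ncard = 3 ∧ ∃ (x : E3) (r : ℝ),
      Metric.ball x r ∩ S = ∅ ∧ Metric.sphere x r ∩ S = T}).ncard : ℤ)
      ≤ (n : ℤ) * n - 3 * n := hcast
    _ = (n : ℤ) ^ 2 - 3 * n := by ring
end
end

section
/- Let p₀, p₁, p₂, p₃, p₄ be points in ℝ³ such that p₀, p₁, p₂, p₃ are affinely independent, and let x ∈ ℝ³ and ρ > 0 be such that dist pᵢ x = ρ for i = 0, 1, 2, 3 (so x, ρ are the circumcenter and circumradius of the tetrahedron p₀p₁p₂p₃). Let M₄ be the 4×4 matrix whose i-th row (i = 0,…,3) is (pᵢ 0, pᵢ 1, pᵢ 2, 1), and let M₅ be the 5×5 matrix whose i-th row (i = 0,…,4) is (pᵢ 0, pᵢ 1, pᵢ 2, ‖pᵢ‖², 1). Then dist p₄ x < ρ (p₄ lies strictly inside the circumsphere) if and only if det M₄ · det M₅ > 0. -/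
noncomputable section

private lemma dist_sq_eq (p q : E3) :
    dist p q ^ 2 = (p 0 - q 0)^2 + (p 1 - q 1)^2 + (p 2 - q 2)^2 := by
  rw [EuclideanSpace.dist_eq, Real.sq_sqrt (by positivity)]
  simp [Fin.sum_univ_three, Real.dist_eq, sq_abs]

private lemma norm_sq_eq (p : E3) :
    ‖p‖ ^ 2 = (p 0)^2 + (p 1)^2 + (p 2)^2 := by
  rw [EuclideanSpace.norm_eq, Real.sq_sqrt (by positivity)]
  simp [Fin.sum_univ_three, sq_abs]

set_option maxHeartbeats 4000000 in
set_option maxRecDepth 100000 in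
private lemma key (a0 b0 c0 a1 b1 c1 a2 b2 c2 a3 b3 c3 a4 b4 c4 X Y Z r : ℝ)
    (h0 : (a0-X)^2+(b0-Y)^2+(c0-Z)^2 = r)
    (h1 : (a1-X)^2+(b1-Y)^2+(c1-Z)^2 = r)
    (h2 : (a2-X)^2+(b2-Y)^2+(c2-Z)^2 = r)
    (h3 : (a3-X)^2+(b3-Y)^2+(c3-Z)^2 = r) :
    Matrix.det !![a0,b0,c0,a0^2+b0^2+c0^2,1;
         a1,b1,c1,a1^2+b1^2+c1^2,1;
         a2,b2,c2,a2^2+b2^2+c2^2,1;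
         a3,b3,c3,a3^2+b3^2+c3^2,1;
         a4,b4,c4,a4^2+b4^2+c4^2,1] =
    (r - ((a4-X)^2+(b4-Y)^2+(c4-Z)^2)) * Matrix.det !![a0,b0,c0,1;
         a1,b1,c1,1;
         a2,b2,c2,1;
         a3,b3,c3,1] := by
  simp only [Matrix.det_succ_row_zero, Fin.sum_univ_succ, Fin.succAbove, Fin.lt_def,
    Matrix.cons_val_succ, Fin.castSucc, Fin.castAdd, Fin.castLE, Matrix.submatrix_apply,
    Fin.sum_univ_zero, Matrix.cons_val', Matrix.cons_val_zero, Matrix.cons_val_fin_one,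
    Matrix.det_fin_one, Matrix.of_apply, Matrix.cons_val_one, Matrix.head_cons, Matrix.head_fin_const, Matrix.cons_val_two, Matrix.tail_cons]
  norm_num
  simp [Matrix.vecHead, Matrix.vecTail]
  linear_combination (((-1)) * (0 + a1*b2*c3*1 - a1*b2*1*c4 - a1*c2*b3*1 + a1*c2*1*b4 + a1*1*b3*c4 - a1*1*c3*b4 - b1*a2*c3*1 + b1*a2*1*c4 + b1*c2*a3*1 - b1*c2*1*a4 - b1*1*a3*c4 + b1*1*c3*a4 + c1*a2*b3*1 - c1*a2*1*b4 - c1*b2*a3*1 + c1*b2*1*a4 + c1*1*a3*b4 - c1*1*b3*a4 - 1*a2*b3*c4 + 1*a2*c3*b4 + 1*b2*a3*c4 - 1*b2*c3*a4 - 1*c2*a3*b4 + 1*c2*b3*a4)) * h0 + (((1)) * (0 + a0*b2*c3*1 - a0*b2*1*c4 - a0*c2*b3*1 + a0*c2*1*b4 + a0*1*b3*c4 - a0*1*c3*b4 - b0*a2*c3*1 + b0*a2*1*c4 + b0*c2*a3*1 - b0*c2*1*a4 - b0*1*a3*c4 + b0*1*c3*a4 + c0*a2*b3*1 - c0*a2*1*b4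 - c0*b2*a3*1 + c0*b2*1*a4 + c0*1*a3*b4 - c0*1*b3*a4 - 1*a2*b3*c4 + 1*a2*c3*b4 + 1*b2*a3*c4 - 1*b2*c3*a4 - 1*c2*a3*b4 + 1*c2*b3*a4)) * h1 + (((-1)) * (0 + a0*b1*c3*1 - a0*b1*1*c4 - a0*c1*b3*1 + a0*c1*1*b4 + a0*1*b3*c4 - a0*1*c3*b4 - b0*a1*c3*1 + b0*a1*1*c4 + b0*c1*a3*1 - b0*c1*1*a4 - b0*1*a3*c4 + b0*1*c3*a4 + c0*a1*b3*1 - c0*a1*1*b4 - c0*b1*a3*1 + c0*b1*1*a4 + c0*1*a3*b4 - c0*1*b3*a4 - 1*a1*b3*c4 + 1*a1*c3*b4 + 1*b1*a3*c4 - 1*b1*c3*a4 - 1*c1*a3*b4 + 1*c1*b3*a4)) * h2 + (((1)) * (0 + a0*b1*c2*1 - a0*b1*1*c4 - a0*c1*b2*1 + a0*c1*1*b4 + a0*1*b2*c4 - a0*1*c2*b4 - b0*a1*c2*1 + b0*a1*1*c4 + b0*c1*a2*1 - b0*c1*1*a4 - b0*1*a2*c4 + b0*1*c2*a4 + c0*a1*b2*1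 - c0*a1*1*b4 - c0*b1*a2*1 + c0*b1*1*a4 + c0*1*a2*b4 - c0*1*b2*a4 - 1*a1*b2*c4 + 1*a1*c2*b4 + 1*b1*a2*c4 - 1*b1*c2*a4 - 1*c1*a2*b4 + 1*c1*b2*a4)) * h3

private lemma det4_ne_zero (p₀ p₁ p₂ p₃ : E3)
    (hind : AffineIndependent ℝ ![p₀, p₁, p₂, p₃]) :
    Matrix.det !![p₀ 0, p₀ 1, p₀ 2, 1;
                  p₁ 0, p₁ 1, p₁ 2, 1;
                  p₂ 0, p₂ 1, p₂ 2, 1;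
                  p₃ 0, p₃ 1, p₃ 2, 1] ≠ 0 := by
  intro hdet
  obtain ⟨v, hv, hvM⟩ := Matrix.exists_vecMul_eq_zero_iff.mpr hdet
  have hcol : ∀ j : Fin 4, ∑ i : Fin 4, v i *
      (!![p₀ 0, p₀ 1, p₀ 2, 1; p₁ 0, p₁ 1, p₁ 2, 1;
         p₂ 0, p₂ 1, p₂ 2, 1; p₃ 0, p₃ 1, p₃ 2, 1] i j) = 0 := by
    intro j
    have := congrFun hvM j
    simpa [Matrix.vecMul, dotProduct] using this
  have hsum : ∑ i : Fin 4, v i = 0 := by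
    have := hcol 3
    simpa [Fin.sum_univ_four] using this
  have hvec : ∑ i : Fin 4, v i • (![p₀, p₁, p₂, p₃] i) = 0 := by
    have h0 := hcol 0; have h1 := hcol 1; have h2 := hcol 2
    simp only [Fin.sum_univ_four] at h0 h1 h2 ⊢
    refine PiLp.ext fun j => ?_
    fin_cases j <;>
      simpa [Fin.sum_univ_four, PiLp.smul_apply, smul_eq_mul] using (by assumption : _ = (0:ℝ))
  have := hind.eq_zero_of_sum_eq_zero hsum hvec
  exact hv (funext fun i => this i (Finset.mem_univ i))

set_option maxHeartbeats 1600000 in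
set_option maxRecDepth 8000 in
theorem sphere_test (p₀ p₁ p₂ p₃ p₄ : E3)
    (hind : AffineIndependent ℝ ![p₀, p₁, p₂, p₃])
    (x : E3) (ρ : ℝ) (hρ : 0 < ρ)
    (h₀ : dist p₀ x = ρ) (h₁ : dist p₁ x = ρ)
    (h₂ : dist p₂ x = ρ) (h₃ : dist p₃ x = ρ) :
    dist p₄ x < ρ ↔
      (Matrix.det !![p₀ 0, p₀ 1, p₀ 2, 1;
                     p₁ 0, p₁ 1, p₁ 2, 1;
                     p₂ 0, p₂ 1, p₂ 2, 1;
                     p₃ 0, p₃ 1, p₃ 2, 1]) *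
      (Matrix.det !![p₀ 0, p₀ 1, p₀ 2, ‖p₀‖ ^ 2, 1;
                     p₁ 0, p₁ 1, p₁ 2, ‖p₁‖ ^ 2, 1;
                     p₂ 0, p₂ 1, p₂ 2, ‖p₂‖ ^ 2, 1;
                     p₃ 0, p₃ 1, p₃ 2, ‖p₃‖ ^ 2, 1;
                     p₄ 0, p₄ 1, p₄ 2, ‖p₄‖ ^ 2, 1]) > 0 := by
  have e₀ : (p₀ 0 - x 0)^2 + (p₀ 1 - x 1)^2 + (p₀ 2 - x 2)^2 = ρ^2 := by
    rw [← dist_sq_eq, h₀]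
  have e₁ : (p₁ 0 - x 0)^2 + (p₁ 1 - x 1)^2 + (p₁ 2 - x 2)^2 = ρ^2 := by
    rw [← dist_sq_eq, h₁]
  have e₂ : (p₂ 0 - x 0)^2 + (p₂ 1 - x 1)^2 + (p₂ 2 - x 2)^2 = ρ^2 := by
    rw [← dist_sq_eq, h₂]
  have e₃ : (p₃ 0 - x 0)^2 + (p₃ 1 - x 1)^2 + (p₃ 2 - x 2)^2 = ρ^2 := by
    rw [← dist_sq_eq, h₃]
  have hdet5 :
      Matrix.det !![p₀ 0, p₀ 1, p₀ 2, ‖p₀‖ ^ 2, 1;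
                    p₁ 0, p₁ 1, p₁ 2, ‖p₁‖ ^ 2, 1;
                    p₂ 0, p₂ 1, p₂ 2, ‖p₂‖ ^ 2, 1;
                    p₃ 0, p₃ 1, p₃ 2, ‖p₃‖ ^ 2, 1;
                    p₄ 0, p₄ 1, p₄ 2, ‖p₄‖ ^ 2, 1] =
      (ρ^2 - ((p₄ 0 - x 0)^2 + (p₄ 1 - x 1)^2 + (p₄ 2 - x 2)^2)) *
      Matrix.det !![p₀ 0, p₀ 1, p₀ 2, 1;
                    p₁ 0, p₁ 1, p₁ 2, 1;
                    p₂ 0, p₂ 1, p₂ 2, 1;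
                    p₃ 0, p₃ 1, p₃ 2, 1] := by
    rw [norm_sq_eq p₀, norm_sq_eq p₁, norm_sq_eq p₂, norm_sq_eq p₃, norm_sq_eq p₄]
    exact key (p₀ 0) (p₀ 1) (p₀ 2) (p₁ 0) (p₁ 1) (p₁ 2) (p₂ 0) (p₂ 1) (p₂ 2) (p₃ 0) (p₃ 1) (p₃ 2) (p₄ 0) (p₄ 1) (p₄ 2) (x 0) (x 1) (x 2) (ρ^2) e₀ e₁ e₂ e₃
  have hdet4 := det4_ne_zero p₀ p₁ p₂ p₃ hind
  set D4 := Matrix.det !![p₀ 0, p₀ 1, p₀ 2, 1;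
                          p₁ 0, p₁ 1, p₁ 2, 1;
                          p₂ 0, p₂ 1, p₂ 2, 1;
                          p₃ 0, p₃ 1, p₃ 2, 1] with hD4
  rw [hdet5]
  have hsq : 0 < D4 ^ 2 := by positivity
  have hd2 : dist p₄ x ^ 2 = (p₄ 0 - x 0)^2 + (p₄ 1 - x 1)^2 + (p₄ 2 - x 2)^2 :=
    dist_sq_eq p₄ x
  have hdn : 0 ≤ dist p₄ x := dist_nonneg
  constructor
  · intro h
    have h2 : (p₄ 0 - x 0)^2 + (p₄ 1 - x 1)^2 + (p₄ 2 - x 2)^2 < ρ^2 := by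
      nlinarith [hd2, hdn]
    have hr : D4 * ((ρ^2 - ((p₄ 0 - x 0)^2 + (p₄ 1 - x 1)^2 + (p₄ 2 - x 2)^2)) * D4)
        = (ρ^2 - ((p₄ 0 - x 0)^2 + (p₄ 1 - x 1)^2 + (p₄ 2 - x 2)^2)) * D4^2 := by ring
    rw [gt_iff_lt, hr]
    exact mul_pos (by linarith) hsq
  · intro h
    have hr : D4 * ((ρ^2 - ((p₄ 0 - x 0)^2 + (p₄ 1 - x 1)^2 + (p₄ 2 - x 2)^2)) * D4)
        = (ρ^2 - ((p₄ 0 - x 0)^2 + (p₄ 1 - x 1)^2 + (p₄ 2 - x 2)^2)) * D4^2 := by ring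
    rw [gt_iff_lt, hr] at h
    have h2 : (p₄ 0 - x 0)^2 + (p₄ 1 - x 1)^2 + (p₄ 2 - x 2)^2 < ρ^2 := by
      by_contra h3
      push_neg at h3
      nlinarith [hsq]
    nlinarith [hd2, hdn, hρ]
end
end

section
/- Let p₀, p₁, p₂, p₃ be four affinely independent points in ℝ³ and let ρ be the circumradius of the tetrahedron p₀p₁p₂p₃ (the radius of the unique sphere through the four points). Define the following determinants of 4×4 matrices whose i-th rows (i = 0,…,3) are: a with rows (pᵢ 0, pᵢ 1, pᵢ 2, 1); c with rows (pᵢ 0, pᵢ 1, pᵢ 2, ‖pᵢ‖²); Dx with rows (pᵢ 1, pᵢ 2, ‖pᵢ‖², 1); Dy with rows (pᵢ 0, pᵢ 2, ‖pᵢ‖², 1); Dz with rows (pᵢ 0, pᵢ 1, ‖pᵢ‖², 1). Then 4·a²·ρ² = Dx² + Dy² + Dz² + 4·a·c. -/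
noncomputable section

lemma norm_sq_e3 (p : E3) : ‖p‖ ^ 2 = p 0 ^ 2 + p 1 ^ 2 + p 2 ^ 2 := by
  rw [EuclideanSpace.norm_eq, Real.sq_sqrt (by positivity)]
  simp [Fin.sum_univ_three, sq]

lemma dist_sq_e3 (p q : E3) :
    dist p q ^ 2 = (p 0 - q 0) ^ 2 + (p 1 - q 1) ^ 2 + (p 2 - q 2) ^ 2 := by
  rw [EuclideanSpace.dist_eq, Real.sq_sqrt (by positivity)]
  simp [Fin.sum_univ_three, Real.dist_eq, sq_abs]


set_option maxHeartbeats 1000000 in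
lemma det_fin_four' (a b c d e f g h i j k l m n o p : ℝ) :
    Matrix.det !![a, b, c, d; e, f, g, h; i, j, k, l; m, n, o, p] =
      a * (f * (k * p - l * o) - g * (j * p - l * n) + h * (j * o - k * n))
      - b * (e * (k * p - l * o) - g * (i * p - l * m) + h * (i * o - k * m))
      + c * (e * (j * p - l * n) - f * (i * p - l * m) + h * (i * n - j * m))
      - d * (e * (j * o - k * n) - f * (i * o - k * m) + g * (i * n - j * m)) := by
  simp [Matrix.det_succ_row_zero, Fin.sum_univ_succ, Fin.succAbove]
  ring

set_option maxHeartbeats 1000000 in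
theorem circumradius_tetrahedron_formula (p₀ p₁ p₂ p₃ : E3)
    (hind : AffineIndependent ℝ ![p₀, p₁, p₂, p₃]) :
    let ρ := (⟨![p₀, p₁, p₂, p₃], hind⟩ : Affine.Simplex ℝ E3 3).circumradius
    let a := Matrix.det !![p₀ 0, p₀ 1, p₀ 2, 1;
                           p₁ 0, p₁ 1, p₁ 2, 1;
                           p₂ 0, p₂ 1, p₂ 2, 1;
                           p₃ 0, p₃ 1, p₃ 2, 1]
    let c := Matrix.det !![p₀ 0, p₀ 1, p₀ 2, ‖p₀‖ ^ 2;
                           p₁ 0, p₁ 1, p₁ 2, ‖p₁‖ ^ 2;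
                           p₂ 0, p₂ 1, p₂ 2, ‖p₂‖ ^ 2;
                           p₃ 0, p₃ 1, p₃ 2, ‖p₃‖ ^ 2]
    let Dx := Matrix.det !![p₀ 1, p₀ 2, ‖p₀‖ ^ 2, 1;
                            p₁ 1, p₁ 2, ‖p₁‖ ^ 2, 1;
                            p₂ 1, p₂ 2, ‖p₂‖ ^ 2, 1;
                            p₃ 1, p₃ 2, ‖p₃‖ ^ 2, 1]
    let Dy := Matrix.det !![p₀ 0, p₀ 2, ‖p₀‖ ^ 2, 1;
                            p₁ 0, p₁ 2, ‖p₁‖ ^ 2, 1;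
                            p₂ 0, p₂ 2, ‖p₂‖ ^ 2, 1;
                            p₃ 0, p₃ 2, ‖p₃‖ ^ 2, 1]
    let Dz := Matrix.det !![p₀ 0, p₀ 1, ‖p₀‖ ^ 2, 1;
                            p₁ 0, p₁ 1, ‖p₁‖ ^ 2, 1;
                            p₂ 0, p₂ 1, ‖p₂‖ ^ 2, 1;
                            p₃ 0, p₃ 1, ‖p₃‖ ^ 2, 1]
    4 * a ^ 2 * ρ ^ 2 = Dx ^ 2 + Dy ^ 2 + Dz ^ 2 + 4 * a * c := by
  intro ρ a c Dx Dy Dz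
  set s : Affine.Simplex ℝ E3 3 := ⟨![p₀, p₁, p₂, p₃], hind⟩ with hs
  set o : E3 := s.circumcenter with ho
  have hd : ∀ i, dist (s.points i) o = ρ := s.dist_circumcenter_eq_circumradius
  have h0 := hd 0; have h1 := hd 1; have h2 := hd 2; have h3 := hd 3
  simp only [hs, Matrix.cons_val_zero, Matrix.cons_val_one, Matrix.head_cons,
    Matrix.cons_val_two, Matrix.tail_cons, Matrix.cons_val_three] at h0 h1 h2 h3
  have e0 : (p₀ 0 - o 0) ^ 2 + (p₀ 1 - o 1) ^ 2 + (p₀ 2 - o 2) ^ 2 = ρ ^ 2 := by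
    rw [← dist_sq_e3, h0]
  have e1 : (p₁ 0 - o 0) ^ 2 + (p₁ 1 - o 1) ^ 2 + (p₁ 2 - o 2) ^ 2 = ρ ^ 2 := by
    rw [← dist_sq_e3, h1]
  have e2 : (p₂ 0 - o 0) ^ 2 + (p₂ 1 - o 1) ^ 2 + (p₂ 2 - o 2) ^ 2 = ρ ^ 2 := by
    rw [← dist_sq_e3, h2]
  have e3 : (p₃ 0 - o 0) ^ 2 + (p₃ 1 - o 1) ^ 2 + (p₃ 2 - o 2) ^ 2 = ρ ^ 2 := by
    rw [← dist_sq_e3, h3]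
  have n0 : ‖p₀‖ ^ 2 = 2 * o 0 * p₀ 0 + 2 * o 1 * p₀ 1 + 2 * o 2 * p₀ 2
      + (ρ ^ 2 - (o 0 ^ 2 + o 1 ^ 2 + o 2 ^ 2)) := by
    rw [norm_sq_e3]; nlinarith [e0]
  have n1 : ‖p₁‖ ^ 2 = 2 * o 0 * p₁ 0 + 2 * o 1 * p₁ 1 + 2 * o 2 * p₁ 2
      + (ρ ^ 2 - (o 0 ^ 2 + o 1 ^ 2 + o 2 ^ 2)) := by
    rw [norm_sq_e3]; nlinarith [e1]
  have n2 : ‖p₂‖ ^ 2 = 2 * o 0 * p₂ 0 + 2 * o 1 * p₂ 1 + 2 * o 2 * p₂ 2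
      + (ρ ^ 2 - (o 0 ^ 2 + o 1 ^ 2 + o 2 ^ 2)) := by
    rw [norm_sq_e3]; nlinarith [e2]
  have n3 : ‖p₃‖ ^ 2 = 2 * o 0 * p₃ 0 + 2 * o 1 * p₃ 1 + 2 * o 2 * p₃ 2
      + (ρ ^ 2 - (o 0 ^ 2 + o 1 ^ 2 + o 2 ^ 2)) := by
    rw [norm_sq_e3]; nlinarith [e3]
  clear_value o
  have hDx : Dx = 2 * o 0 * a := by
    simp only [a, Dx, det_fin_four']
    rw [n0, n1, n2, n3]; ring
  have hDy : Dy = -(2 * o 1 * a) := by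
    simp only [a, Dy, det_fin_four']
    rw [n0, n1, n2, n3]; ring
  have hDz : Dz = 2 * o 2 * a := by
    simp only [a, Dz, det_fin_four']
    rw [n0, n1, n2, n3]; ring
  have hc : c = (ρ ^ 2 - (o 0 ^ 2 + o 1 ^ 2 + o 2 ^ 2)) * a := by
    simp only [a, c, det_fin_four']
    rw [n0, n1, n2, n3]; ring
  rw [hDx, hDy, hDz, hc]; ring
end
end

section
/- For every natural number n, every family of points p : Fin n → ℝ³, and every real ε > 0, there exists a family q : Fin n → ℝ³ with dist (p i) (q i) < ε for every i, such that q is in general position: q is injective, every four of the points q i are affinely independent (for every injective map s : Fin 4 → Fin n, the family q ∘ s is affinely independent over ℝ), and no five of the points are cospherical (for every injective map s : Fin 5 → Fin n, the set {q (s i)} is not contained in any sphere). (Point sets in general position are dense; this justifies the simulated-perturbation technique.) -/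
noncomputable section
open MeasureTheory EuclideanGeometry Set

-- helper 1: affine span of ≤ 3 points is null
lemma null_span (T : Finset E3) (hT : T.card ≤ 3) :
    volume (affineSpan ℝ (T : Set E3) : Set E3) = 0 := by
  apply Measure.addHaar_affineSubspace
  intro htop
  rcases Nat.eq_zero_or_pos T.card with h0 | hpos
  · rw [Finset.card_eq_zero] at h0
    subst h0
    simp only [Finset.coe_empty] at htop
    rw [AffineSubspace.span_empty] at htop
    exact bot_ne_top htop
  · obtain ⟨m, hm⟩ : ∃ m, T.card = m + 1 := ⟨T.card - 1, (Nat.succ_pred_eq_of_pos hpos).symm⟩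
    classical
    have hle : Module.finrank ℝ (vectorSpan ℝ (T : Set E3)) ≤ m := by
      have := finrank_vectorSpan_image_finset_le ℝ (id : E3 → E3) T (by simpa using hm)
      rwa [Finset.image_id] at this
    have : vectorSpan ℝ (T : Set E3) = ⊤ := by
      rw [← direction_affineSpan, htop, AffineSubspace.direction_top]
    rw [this, finrank_top, finrank_euclideanSpace_fin] at hle
    omega

-- helper 2: cospherical bad set is null
lemma null_cosph (f : Fin 4 → E3) (hf : AffineIndependent ℝ f) :
    volume {x : E3 | ∃ c r, (∀ i, dist (f i) c = r) ∧ dist x c = r} = 0 := by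
  set T : Affine.Simplex ℝ E3 3 := ⟨f, hf⟩ with hT
  have hspan : affineSpan ℝ (Set.range f) = ⊤ := by
    rw [hf.affineSpan_eq_top_iff_card_eq_finrank_add_one]
    simp [finrank_euclideanSpace_fin]
  apply measure_mono_null (t := Metric.sphere T.circumcenter T.circumradius) ?_ (Measure.addHaar_sphere volume _ _)
  rintro x ⟨c, r, hcr, hx⟩
  have hc : c ∈ affineSpan ℝ (Set.range T.points) := by
    show c ∈ affineSpan ℝ (Set.range f); rw [hspan]; trivial
  have hc' : c = T.circumcenter := T.eq_circumcenter_of_dist_eq hc hcr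
  have hr' : r = T.circumradius := T.eq_circumradius_of_dist_eq hc hcr
  simp only [Metric.mem_sphere]
  rw [← hc', ← hr']; exact hx

-- helper 3: point avoiding null set in ball
lemma exists_avoid (B : Set E3) (hB : volume B = 0) (p : E3) {ε : ℝ} (hε : 0 < ε) :
    ∃ x : E3, dist p x < ε ∧ x ∉ B := by
  have hpos := Metric.measure_ball_pos volume p hε
  by_contra h
  push_neg at h
  have : Metric.ball p ε ⊆ B := fun x hx => h x (by rwa [dist_comm, ← Metric.mem_ball])
  exact absurd (le_antisymm (hB ▸ measure_mono this) zero_le) (ne_of_gt hpos)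

-- helper 4: tuple independence from range
lemma indep_of_range {ι : Type*} (f : ι → E3) (hf : Function.Injective f)
    (h : AffineIndependent ℝ ((↑) : Set.range f → E3)) : AffineIndependent ℝ f := by
  have := h.comp_embedding (Equiv.ofInjective f hf).toEmbedding
  convert this using 1
  funext i; rfl

lemma key_s18 (ε : ℝ) (hε : 0 < ε) : ∀ (n : ℕ) (p : Fin n → E3),
    ∃ q : Fin n → E3,
      (∀ i, dist (p i) (q i) < ε) ∧
      Function.Injective q ∧
      (∀ (ι : Type) (_ : Fintype ι) (s : ι → Fin n), Function.Injective s →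
        Fintype.card ι ≤ 4 → AffineIndependent ℝ (q ∘ s)) ∧
      (∀ s : Fin 5 → Fin n, Function.Injective s →
        ¬ EuclideanGeometry.Cospherical (Set.range (q ∘ s))) := by
  intro n
  induction n with
  | zero =>
    intro p
    refine ⟨p, fun i => i.elim0, fun i => i.elim0, ?_, fun s _ => (s 0).elim0⟩
    intro ι _ s hs _
    have : IsEmpty ι := Function.isEmpty s
    exact affineIndependent_of_subsingleton ℝ _
  | succ n ih =>
    intro p
    classical
    obtain ⟨q', hd', hinj', hai', hco'⟩ := ih (p ∘ Fin.castSucc)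
    -- the bad set
    set B : Set E3 :=
      (Set.range q') ∪
      (⋃ T : Finset (Fin n), ⋃ (_ : T.card ≤ 3),
        (affineSpan ℝ ((T.image q' : Finset E3) : Set E3) : Set E3)) ∪
      (⋃ v : Fin 4 → Fin n, ⋃ (_ : Function.Injective v),
        {x : E3 | ∃ c r, (∀ i, dist (q' (v i)) c = r) ∧ dist x c = r}) with hB
    have hBnull : volume B = 0 := by
      rw [hB]
      refine measure_union_null (measure_union_null ?_ ?_) ?_
      · exact (Set.finite_range q').measure_zero volume
      · refine measure_iUnion_null fun T => measure_iUnion_null fun hT => ?_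
        exact null_span _ ((Finset.card_image_le).trans hT)
      · refine measure_iUnion_null fun v => measure_iUnion_null fun hv => ?_
        refine null_cosph (q' ∘ v) ?_
        exact hai' (Fin 4) inferInstance v hv (by simp)
    obtain ⟨x, hx, hxB⟩ := exists_avoid B hBnull (p (Fin.last n)) hε
    have hxr : x ∉ Set.range q' := fun h => hxB (Or.inl (Or.inl h))
    have hxspan : ∀ T : Finset (Fin n), T.card ≤ 3 →
        x ∉ affineSpan ℝ ((T.image q' : Finset E3) : Set E3) := by
      intro T hT hmem
      exact hxB (Or.inl (Or.inr (Set.mem_iUnion.2 ⟨T, Set.mem_iUnion.2 ⟨hT, hmem⟩⟩)))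
    have hxcos : ∀ v : Fin 4 → Fin n, Function.Injective v →
        ¬ ∃ c r, (∀ i, dist (q' (v i)) c = r) ∧ dist x c = r := by
      intro v hv h
      exact hxB (Or.inr (Set.mem_iUnion.2 ⟨v, Set.mem_iUnion.2 ⟨hv, h⟩⟩))
    refine ⟨Fin.snoc q' x, ?_, ?_, ?_, ?_⟩
    · -- distances
      intro i
      refine Fin.lastCases ?_ ?_ i
      · simpa using hx
      · intro j; simpa using hd' j
    · -- injectivity
      intro i j hij
      induction i using Fin.lastCases with
      | last =>
        induction j using Fin.lastCases with
        | last => rfl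
        | cast j =>
          simp only [Fin.snoc_last, Fin.snoc_castSucc] at hij
          exact absurd ⟨j, hij.symm⟩ hxr
      | cast i =>
        induction j using Fin.lastCases with
        | last =>
          simp only [Fin.snoc_last, Fin.snoc_castSucc] at hij
          exact absurd ⟨i, hij⟩ hxr
        | cast j =>
          simp only [Fin.snoc_castSucc] at hij
          exact congrArg Fin.castSucc (hinj' hij)
    · -- affine independence
      intro ι _ s hs hcard
      by_cases hlast : ∃ i₀, s i₀ = Fin.last n
      · obtain ⟨i₀, hi₀⟩ := hlast
        have hne : ∀ y : {y : ι // y ≠ i₀}, s y ≠ Fin.last n := by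
          rintro ⟨y, hy⟩ h
          exact hy (hs (h.trans hi₀.symm))
        set t : {y : ι // y ≠ i₀} → Fin n := fun y => (s y).castPred (hne y) with ht
        have htc : ∀ y : {y : ι // y ≠ i₀}, Fin.castSucc (t y) = s y := fun y =>
          Fin.castSucc_castPred _ _
        have htinj : Function.Injective t := by
          intro a b hab
          apply Subtype.ext
          apply hs
          rw [← htc a, ← htc b, hab]
        have hsub : AffineIndependent ℝ fun y : {y : ι // y ≠ i₀} =>
            (Fin.snoc q' x ∘ s) y := by
          have : (fun y : {y : ι // y ≠ i₀} => (Fin.snoc q' x ∘ s) (y : ι)) = q' ∘ t := by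
            funext y
            simp only [Function.comp_apply]
            rw [← htc y, Fin.snoc_castSucc]
          rw [this]
          refine hai' _ inferInstance t htinj ?_
          have h1 : Fintype.card {y : ι // y ≠ i₀} < Fintype.card ι :=
            Fintype.card_subtype_lt (x := i₀) (by simp)
          omega
        refine hsub.affineIndependent_of_notMem_span ?_
        set T : Finset (Fin n) := Finset.univ.image t with hTdef
        have hTcard : T.card ≤ 3 := by
          have h1 : T.card ≤ Fintype.card {y : ι // y ≠ i₀} := by
            rw [hTdef, ← Finset.card_univ]
            exact Finset.card_image_le
          have h2 : Fintype.card {y : ι // y ≠ i₀} < Fintype.card ι :=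
            Fintype.card_subtype_lt (x := i₀) (by simp)
          omega
        intro hmem
        refine hxspan T hTcard ?_
        have himg : (Fin.snoc q' x ∘ s) '' {y | y ≠ i₀} ⊆
            ((T.image q' : Finset E3) : Set E3) := by
          rintro z ⟨y, hy, rfl⟩
          simp only [Function.comp_apply]
          have : s y = Fin.castSucc (t ⟨y, hy⟩) := (htc ⟨y, hy⟩).symm
          rw [this, Fin.snoc_castSucc]
          simp only [Finset.coe_image, Set.mem_image, Finset.mem_coe]
          exact ⟨t ⟨y, hy⟩, by simp [hTdef], rfl⟩
        have hxx : (Fin.snoc q' x ∘ s) i₀ = x := by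
          simp only [Function.comp_apply]
          rw [hi₀, Fin.snoc_last]
        rw [hxx] at hmem
        exact affineSpan_mono ℝ himg hmem
      · push_neg at hlast
        set s' : ι → Fin n := fun i => (s i).castPred (hlast i) with hs'
        have hsc : ∀ i, Fin.castSucc (s' i) = s i := fun i => Fin.castSucc_castPred _ _
        have hs'inj : Function.Injective s' := by
          intro a b hab
          apply hs
          rw [← hsc a, ← hsc b, hab]
        have : Fin.snoc q' x ∘ s = q' ∘ s' := by
          funext i
          simp only [Function.comp_apply]
          rw [← hsc i, Fin.snoc_castSucc]
        rw [this]
        exact hai' ι inferInstance s' hs'inj hcard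
    · -- not cospherical
      intro s hs hcos
      by_cases hlast : ∃ i₀, s i₀ = Fin.last n
      · obtain ⟨i₀, hi₀⟩ := hlast
        have hne : ∀ y : {y : Fin 5 // y ≠ i₀}, s y ≠ Fin.last n := by
          rintro ⟨y, hy⟩ h
          exact hy (hs (h.trans hi₀.symm))
        set t : {y : Fin 5 // y ≠ i₀} → Fin n := fun y => (s y).castPred (hne y) with ht
        have htc : ∀ y : {y : Fin 5 // y ≠ i₀}, Fin.castSucc (t y) = s y := fun y =>
          Fin.castSucc_castPred _ _
        have htinj : Function.Injective t := by
          intro a b hab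
          apply Subtype.ext
          apply hs
          rw [← htc a, ← htc b, hab]
        have hcard4 : Fintype.card {y : Fin 5 // y ≠ i₀} = 4 := by
          simp [Fintype.card_subtype_compl]
        set e := (Fintype.equivFinOfCardEq hcard4).symm with he
        set v : Fin 4 → Fin n := fun j => t (e j) with hv
        have hvinj : Function.Injective v := htinj.comp e.injective
        obtain ⟨c, r, hcr⟩ := hcos
        refine hxcos v hvinj ⟨c, r, ?_, ?_⟩
        · intro i
          have : q' (v i) ∈ Set.range (Fin.snoc q' x ∘ s) := by
            refine ⟨e i, ?_⟩
            simp only [Function.comp_apply]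
            rw [← htc (e i), Fin.snoc_castSucc]
          exact hcr _ this
        · have : x ∈ Set.range (Fin.snoc q' x ∘ s) := by
            refine ⟨i₀, ?_⟩
            simp only [Function.comp_apply]
            rw [hi₀, Fin.snoc_last]
          exact hcr _ this
      · push_neg at hlast
        set s' : Fin 5 → Fin n := fun i => (s i).castPred (hlast i) with hs'
        have hsc : ∀ i, Fin.castSucc (s' i) = s i := fun i => Fin.castSucc_castPred _ _
        have hs'inj : Function.Injective s' := by
          intro a b hab
          apply hs
          rw [← hsc a, ← hsc b, hab]
        have heq : Fin.snoc q' x ∘ s = q' ∘ s' := by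
          funext i
          simp only [Function.comp_apply]
          rw [← hsc i, Fin.snoc_castSucc]
        rw [heq] at hcos
        exact hco' s' hs'inj hcos

theorem general_position_dense (n : ℕ) (p : Fin n → E3) (ε : ℝ) (hε : 0 < ε) :
    ∃ q : Fin n → E3,
      (∀ i, dist (p i) (q i) < ε) ∧
      Function.Injective q ∧
      (∀ s : Fin 4 → Fin n, Function.Injective s →
        AffineIndependent ℝ (q ∘ s)) ∧
      (∀ s : Fin 5 → Fin n, Function.Injective s →
        ¬ EuclideanGeometry.Cospherical (Set.range (q ∘ s))) := by
  obtain ⟨q, hd, hinj, hai, hco⟩ := key_s18 ε hε n p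
  exact ⟨q, hd, hinj, fun s hs => hai (Fin 4) inferInstance s hs (by simp), hco⟩
end
end
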